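/- arXiv:1804.01029 — 5 statements merged into one kernel-verified Lean document; each statement's English description precedes it below -/
import Mathlib

section
/- Suppose A and B are compact Hausdorff topological spaces. If A is evenly continuous with respect to B, then C(B,A)_po is a compact space. In particular, if A is the inverse limit A = {(x_r) ∈ ∏_r A_r : φ_{rt}(x_r) = x_t for all r ≥ t} of an inverse system {A_r, φ_{rt}} over a directed poset R in which each A_r is a compact Hausdorff space that is evenly continuous with respect to B, then C(B,A)_po is a compact space. -/
/-- A set `F` of maps `B → A` is evenly continuous if for each `b ∈ B`, `a ∈ A` and
neighbourhood `U` of `a` there are neighbourhoods `V` of `b` and `W` of `a` such that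
every `f ∈ F` with `f b ∈ W` satisfies `f '' V ⊆ U`. -/
def EvenlyContinuousSet {B A : Type} [TopologicalSpace B] [TopologicalSpace A]
    (F : Set (B → A)) : Prop :=
  ∀ b : B, ∀ a : A, ∀ U ∈ nhds a, ∃ V ∈ nhds b, ∃ W ∈ nhds a,
    ∀ f ∈ F, f b ∈ W → ∀ v ∈ V, f v ∈ U

/-- Pointwise limits of evenly continuous families are continuous (for regular
codomains). -/
lemma continuous_of_mem_closure_evenly {B A : Type} [TopologicalSpace B]
    [TopologicalSpace A] [RegularSpace A] {F : Set (B → A)}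
    (hF : EvenlyContinuousSet F) {g : B → A} (hg : g ∈ closure F) :
    Continuous g := by
  rw [continuous_iff_continuousAt]
  intro b
  rw [ContinuousAt, (closed_nhds_basis (g b)).tendsto_right_iff]
  rintro U ⟨hU, hUc⟩
  obtain ⟨V, hV, W, hW, h⟩ := hF b (g b) U hU
  filter_upwards [hV] with v hv
  by_contra hcon
  have hopen : IsOpen ((fun h : B → A => h b) ⁻¹' interior W ∩
      (fun h : B → A => h v) ⁻¹' Uᶜ) :=
    (isOpen_interior.preimage (continuous_apply b)).inter
      (hUc.isOpen_compl.preimage (continuous_apply v))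
  have hmem : g ∈ (fun h : B → A => h b) ⁻¹' interior W ∩
      (fun h : B → A => h v) ⁻¹' Uᶜ :=
    ⟨mem_interior_iff_mem_nhds.mpr hW, hcon⟩
  obtain ⟨f, hf1, hf2⟩ := mem_closure_iff.mp hg _ hopen hmem
  exact hf1.2 (h f hf2 (interior_subset hf1.1) v hv)

/-- The set of continuous maps is compact in the product (point-open) topology,
assuming even continuity. -/
lemma compactSpace_of_evenly {B A : Type} [TopologicalSpace B]
    [TopologicalSpace A] [CompactSpace A] [RegularSpace A]
    (hF : EvenlyContinuousSet {f : B → A | Continuous f}) :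
    CompactSpace {f : B → A // Continuous f} := by
  have hclosed : IsClosed {f : B → A | Continuous f} :=
    closure_subset_iff_isClosed.mp fun g hg =>
      continuous_of_mem_closure_evenly hF hg
  exact isCompact_iff_compactSpace.mp hclosed.isCompact

/-- If `A` and `B` are compact Hausdorff spaces and `A` is evenly
continuous with respect to `B`, then `C(B,A)_po` (continuous maps with the point-open,
i.e. pointwise convergence, topology) is compact.  In particular, if `A` is the inverse
limit of an inverse system `{A_r, φ_{rt}}` over a directed poset of compact Hausdorff
spaces, each evenly continuous with respect to `B`, then `C(B,A)_po` is compact. -/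
theorem stmt_1
    {B : Type} [TopologicalSpace B] [CompactSpace B] [T2Space B]
    {A : Type} [TopologicalSpace A] [CompactSpace A] [T2Space A]
    {R : Type} [PartialOrder R] [IsDirected R (· ≤ ·)]
    (Ar : R → Type) [∀ r, TopologicalSpace (Ar r)]
    [∀ r, CompactSpace (Ar r)] [∀ r, T2Space (Ar r)]
    (φ : ∀ ⦃r t : R⦄, t ≤ r → Ar r → Ar t)
    (hφcont : ∀ (r t : R) (h : t ≤ r), Continuous (φ h))
    (hφid : ∀ r : R, φ (le_refl r) = id)
    (hφcomp : ∀ (r t u : R) (h1 : u ≤ t) (h2 : t ≤ r) (x : Ar r),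
      φ h1 (φ h2 x) = φ (h1.trans h2) x) :
    -- first claim: even continuity implies compactness of `C(B,A)_po`
    (EvenlyContinuousSet {f : B → A | Continuous f} →
      CompactSpace {f : B → A // Continuous f}) ∧
    -- second claim: for the inverse limit of compact Hausdorff spaces, each evenly
    -- continuous with respect to `B`, the space `C(B, lim A_r)_po` is compact
    ((∀ r, EvenlyContinuousSet {f : B → Ar r | Continuous f}) →
      CompactSpace {f : B → {x : ∀ r, Ar r // ∀ (r t : R) (h : t ≤ r), φ h (x r) = x t} //
        Continuous f}) := by
  constructor
  · exact compactSpace_of_evenly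
  · intro hec
    set A' := {x : ∀ r, Ar r // ∀ (r t : R) (h : t ≤ r), φ h (x r) = x t}
    -- A' is a closed subset of the compact product, hence compact
    have hclosedA' : IsClosed {x : ∀ r, Ar r | ∀ (r t : R) (h : t ≤ r), φ h (x r) = x t} := by
      have : {x : ∀ r, Ar r | ∀ (r t : R) (h : t ≤ r), φ h (x r) = x t} =
          ⋂ (r : R) (t : R) (h : t ≤ r), {x : ∀ r, Ar r | φ h (x r) = x t} := by
        ext x; simp [Set.mem_iInter]
      rw [this]
      refine isClosed_iInter fun r => isClosed_iInter fun t => isClosed_iInter fun h => ?_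
      exact isClosed_eq ((hφcont r t h).comp (continuous_apply r)) (continuous_apply t)
    have hcompA' : CompactSpace A' := isCompact_iff_compactSpace.mp hclosedA'.isCompact
    -- the set of continuous maps B → A' is closed in the product topology
    have hclosed : IsClosed {f : B → A' | Continuous f} := by
      refine closure_subset_iff_isClosed.mp fun g hg => ?_
      have hcomp : ∀ r : R, Continuous fun b => (g b).1 r := by
        intro r
        have hΦ : Continuous fun (h : B → A') (b : B) => (h b).1 r :=
          continuous_pi fun b =>
            (continuous_apply r).comp (continuous_subtype_val.comp (continuous_apply b))
        have hmem : (fun b => (g b).1 r) ∈ closure {f : B → Ar r | Continuous f} := by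
          have h1 : (fun b => (g b).1 r) ∈
              (fun (h : B → A') (b : B) => (h b).1 r) '' closure {f : B → A' | Continuous f} :=
            ⟨g, hg, rfl⟩
          have h2 := image_closure_subset_closure_image hΦ h1
          refine closure_mono ?_ h2
          rintro _ ⟨f, hf, rfl⟩
          exact (continuous_apply r).comp (continuous_subtype_val.comp hf)
        exact continuous_of_mem_closure_evenly (hec r) hmem
      have : Continuous fun b => (g b).1 := continuous_pi hcomp
      exact continuous_induced_rng.mpr this
    exact isCompact_iff_compactSpace.mp hclosed.isCompact
end

section
/- Let G be a topological group and A a compact G-group. Then: (i) the quotient space H¹_cts(G,A)_po is Hausdorff; (ii) Z¹_cts(G,A)_po is compact if and only if H¹_cts(G,A)_po is compact; in particular, if G is a compact Hausdorff space and A is evenly continuous with respect to G, then H¹_cts(G,A)_po is compact. -/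
/-- The space `Z¹_cts(G,A)_po` of continuous 1-cocycles with the point-open
(pointwise convergence) topology. -/
abbrev Z1cts {G A : Type} [Group G] [TopologicalSpace G] [Group A] [TopologicalSpace A]
    (ac : G → A → A) : Type :=
  {a : G → A // Continuous a ∧ ∀ s t : G, a (s * t) = a s * ac s (a t)}

/-- Two continuous cocycles are cohomologous if they are in the same orbit of the
right `A`-action `(a.x)(s) = x⁻¹ · a(s) · (s • x)`. -/
def Cohomologous {G A : Type} [Group G] [TopologicalSpace G] [Group A] [TopologicalSpace A]
    (ac : G → A → A) (a b : Z1cts ac) : Prop :=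
  ∃ x : A, ∀ s : G, b.val s = x⁻¹ * a.val s * ac s x

/-- `H¹_cts(G,A)_po`: the orbit space of `Z¹_cts(G,A)_po` under the action of `A`,
with the quotient topology. -/
abbrev H1cts {G A : Type} [Group G] [TopologicalSpace G] [Group A] [TopologicalSpace A]
    (ac : G → A → A) : Type :=
  Quot (Cohomologous ac)

open Set Topology

section OrbitFibres

variable {X K Y : Type*}

def HasOrbitFibres (π : X → Y) (Φ : X × K → X) : Prop :=
  ∀ a b, π a = π b ↔ ∃ k, Φ (a, k) = b

namespace HasOrbitFibres

variable {π : X → Y} {Φ : X × K → X}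

theorem preimage_image_eq_iUnion (h : HasOrbitFibres π Φ) (U : Set X) :
    π ⁻¹' (π '' U) = ⋃ k, (fun a => Φ (a, k)) '' U := by
  ext b
  simp only [mem_preimage, mem_image, mem_iUnion, h _ b]
  exact ⟨fun ⟨a, ha, k, hk⟩ => ⟨k, a, ha, hk⟩, fun ⟨k, a, ha, hk⟩ => ⟨a, ha, k, hk⟩⟩

theorem preimage_image_eq_fst_image (h : HasOrbitFibres π Φ) (C : Set X) :
    π ⁻¹' (π '' C) = Prod.fst '' (Φ ⁻¹' C) := by
  ext b
  simp only [mem_preimage, mem_image, eq_comm (a := π _) (b := π b), h b, Prod.exists]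
  exact ⟨fun ⟨a, ha, k, hk⟩ => ⟨b, k, hk ▸ ha, rfl⟩, fun ⟨_, k, hk, rfl⟩ => ⟨_, hk, k, rfl⟩⟩

theorem setOf_eq_eq_fst_image (h : HasOrbitFibres π Φ) :
    {q : X × X | π q.1 = π q.2} = Prod.fst '' {p : (X × X) × K | Φ (p.1.1, p.2) = p.1.2} := by
  ext ⟨a, b⟩
  simp [h a b]

theorem preimage_singleton_eq_range (h : HasOrbitFibres π Φ) (a : X) :
    π ⁻¹' {π a} = range fun k => Φ (a, k) := by
  ext b
  simp [eq_comm (a := π b), h a b]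

theorem isOpenMap [TopologicalSpace X] [TopologicalSpace Y] (h : HasOrbitFibres π Φ)
    (hπ : IsQuotientMap π) (hΦ : ∀ k, IsOpenMap fun a => Φ (a, k)) : IsOpenMap π :=
  fun U hU => by
    rw [← hπ.isOpen_preimage, h.preimage_image_eq_iUnion]
    exact isOpen_iUnion fun k => hΦ k U hU

theorem isClosed_setOf_eq [TopologicalSpace X] [TopologicalSpace K] [T2Space X] [CompactSpace K]
    (h : HasOrbitFibres π Φ) (hΦ : Continuous Φ) : IsClosed {q : X × X | π q.1 = π q.2} := by
  rw [h.setOf_eq_eq_fst_image]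
  exact isClosedMap_fst_of_compactSpace _ <| isClosed_eq
    (hΦ.comp (continuous_fst.fst.prodMk continuous_snd)) continuous_fst.snd

variable [TopologicalSpace X] [TopologicalSpace K] [TopologicalSpace Y]

theorem t2Space [T2Space X] [CompactSpace K] (h : HasOrbitFibres π Φ) (hπ : IsQuotientMap π)
    (hΦ : Continuous Φ) (hΦopen : ∀ k, IsOpenMap fun a => Φ (a, k)) : T2Space Y :=
  (t2Space_iff_of_isOpenQuotientMap ⟨hπ.surjective, hπ.continuous, h.isOpenMap hπ hΦopen⟩).2
    (h.isClosed_setOf_eq hΦ)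

theorem isClosedMap [CompactSpace K] (h : HasOrbitFibres π Φ) (hπ : IsQuotientMap π)
    (hΦ : Continuous Φ) : IsClosedMap π := fun C hC => by
  rw [← hπ.isClosed_preimage, h.preimage_image_eq_fst_image]
  exact isClosedMap_fst_of_compactSpace _ (hC.preimage hΦ)

theorem isProperMap [CompactSpace K] (h : HasOrbitFibres π Φ) (hπ : IsQuotientMap π)
    (hΦ : Continuous Φ) : IsProperMap π := by
  refine isProperMap_iff_isClosedMap_and_compact_fibers.2
    ⟨hπ.continuous, h.isClosedMap hπ hΦ, fun y => ?_⟩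
  obtain ⟨a, rfl⟩ := hπ.surjective y
  rw [h.preimage_singleton_eq_range]
  exact isCompact_range (hΦ.comp (continuous_const.prodMk continuous_id))

theorem compactSpace_iff [CompactSpace K] (h : HasOrbitFibres π Φ) (hπ : IsQuotientMap π)
    (hΦ : Continuous Φ) : CompactSpace X ↔ CompactSpace Y :=
  ⟨fun _ => hπ.surjective.compactSpace hπ.continuous,
    fun _ => ⟨by simpa using (h.isProperMap hπ hΦ).isCompact_preimage isCompact_univ⟩⟩

end HasOrbitFibres

end OrbitFibres

theorem EvenlyContinuousSet.continuous_of_mem_closure {B A : Type} [TopologicalSpace B]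
    [TopologicalSpace A] [RegularSpace A] {F : Set (B → A)} (hF : EvenlyContinuousSet F)
    {f : B → A} (hf : f ∈ closure F) : Continuous f := by
  have := mem_closure_iff_nhdsWithin_neBot.1 hf
  refine continuous_iff_continuousAt.2 fun b => (closed_nhds_basis (f b)).tendsto_right_iff.2 ?_
  rintro U ⟨hU, hUc⟩
  obtain ⟨V, hV, W, hW, hVU⟩ := hF b (f b) U hU
  filter_upwards [hV] with v hv
  refine hUc.mem_of_tendsto ((continuous_apply v).continuousWithinAt (s := F)) ?_
  filter_upwards [self_mem_nhdsWithin,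
    ((continuous_apply b).tendsto f).mono_left nhdsWithin_le_nhds |>.eventually_mem hW]
    with g hgF hgW
  exact hVU g hgF hgW v hv

theorem isClosed_setOf_cocycle {G A : Type} [Mul G] [Mul A] [TopologicalSpace A]
    [ContinuousMul A] [T2Space A] {ac : G → A → A} (hac : ∀ s, Continuous (ac s)) :
    IsClosed {a : G → A | ∀ s t : G, a (s * t) = a s * ac s (a t)} := by
  simp only [ofPred_forall]
  exact isClosed_iInter fun s => isClosed_iInter fun t => isClosed_eq (continuous_apply _)
    ((continuous_apply s).mul ((hac s).comp (continuous_apply t)))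

theorem compactSpace_z1cts_of_evenlyContinuous {G A : Type} [Group G] [TopologicalSpace G]
    [Group A] [TopologicalSpace A] [RegularSpace A] [ContinuousMul A] [T2Space A]
    [CompactSpace A] {ac : G → A → A} (hac : ∀ s, Continuous (ac s))
    (hec : EvenlyContinuousSet {f : G → A | Continuous f}) : CompactSpace (Z1cts ac) := by
  have hcont : IsClosed {f : G → A | Continuous f} :=
    isClosed_of_closure_subset fun _ hf => hec.continuous_of_mem_closure hf
  exact isCompact_iff_compactSpace.1 (hcont.inter (isClosed_setOf_cocycle hac)).isCompact

section CocycleTwist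

variable {G A : Type} [Group G] [TopologicalSpace G] [Group A] [TopologicalSpace A]
  [IsTopologicalGroup A] {ac : G → A → A}

def cocycleTwist (hac : Continuous fun p : G × A => ac p.1 p.2)
    (hcomp : ∀ (s t : G) (x : A), ac (s * t) x = ac s (ac t x))
    (hdist : ∀ (s : G) (x y : A), ac s (x * y) = ac s x * ac s y)
    (p : Z1cts ac × A) : Z1cts ac :=
  ⟨fun s => p.2⁻¹ * p.1.val s * ac s p.2, by
    refine ⟨(continuous_const.mul p.1.2.1).mul (hac.comp (continuous_id.prodMk continuous_const)),
      fun s t => ?_⟩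
    have hinv : ac s p.2⁻¹ = (ac s p.2)⁻¹ := map_inv (MonoidHom.mk' (ac s) (hdist s)) p.2
    dsimp only
    rw [p.1.2.2 s t, hcomp, hdist, hdist, hinv]
    group⟩

variable (hac : Continuous fun p : G × A => ac p.1 p.2)
  (hcomp : ∀ (s t : G) (x : A), ac (s * t) x = ac s (ac t x))
  (hdist : ∀ (s : G) (x y : A), ac s (x * y) = ac s x * ac s y)

theorem cocycleTwist_one (a : Z1cts ac) : cocycleTwist hac hcomp hdist (a, 1) = a :=
  Subtype.ext <| funext fun s => by
    have hone : ac s 1 = 1 := map_one (MonoidHom.mk' (ac s) (hdist s))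
    simp [cocycleTwist, hone]

theorem cocycleTwist_cocycleTwist (a : Z1cts ac) (x y : A) :
    cocycleTwist hac hcomp hdist (cocycleTwist hac hcomp hdist (a, x), y) =
      cocycleTwist hac hcomp hdist (a, x * y) :=
  Subtype.ext <| funext fun s => by
    simp [cocycleTwist, hdist, mul_assoc]

theorem cohomologous_iff_exists_cocycleTwist (a b : Z1cts ac) :
    Cohomologous ac a b ↔ ∃ x, cocycleTwist hac hcomp hdist (a, x) = b := by
  simp only [Cohomologous, Subtype.ext_iff, funext_iff, eq_comm (b := b.val _)]
  rfl

theorem hasOrbitFibres_cocycleTwist :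
    HasOrbitFibres (Quot.mk (Cohomologous ac)) (cocycleTwist hac hcomp hdist) := fun a b => by
  have hr : Equivalence (Cohomologous ac) := by
    refine ⟨fun a => ?_, fun {a b} hab => ?_, fun {a b c} hab hbc => ?_⟩ <;>
      simp only [cohomologous_iff_exists_cocycleTwist hac hcomp hdist] at *
    · exact ⟨1, cocycleTwist_one hac hcomp hdist a⟩
    · obtain ⟨x, rfl⟩ := hab
      exact ⟨x⁻¹, by rw [cocycleTwist_cocycleTwist, mul_inv_cancel, cocycleTwist_one]⟩
    · obtain ⟨x, rfl⟩ := hab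
      obtain ⟨y, rfl⟩ := hbc
      exact ⟨x * y, (cocycleTwist_cocycleTwist hac hcomp hdist a x y).symm⟩
  rw [Quot.eq, hr.eqvGen_iff, cohomologous_iff_exists_cocycleTwist hac hcomp hdist]

theorem continuous_cocycleTwist : Continuous (cocycleTwist hac hcomp hdist) :=
  continuous_induced_rng.2 <| continuous_pi fun s =>
    (continuous_snd.inv.mul ((continuous_apply s).comp continuous_subtype_val.fst')).mul
      (hac.comp (continuous_const.prodMk continuous_snd))

theorem isOpenMap_cocycleTwist (x : A) :
    IsOpenMap fun a => cocycleTwist hac hcomp hdist (a, x) :=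
  IsOpenMap.of_inverse (f' := fun a => cocycleTwist hac hcomp hdist (a, x⁻¹))
    ((continuous_cocycleTwist hac hcomp hdist).comp (continuous_id.prodMk continuous_const))
    (fun a => by simp only [cocycleTwist_cocycleTwist, inv_mul_cancel, cocycleTwist_one])
    (fun a => by simp only [cocycleTwist_cocycleTwist, mul_inv_cancel, cocycleTwist_one])

end CocycleTwist

theorem stmt_9_general
    {G : Type} [Group G] [TopologicalSpace G]
    {A : Type} [Group A] [TopologicalSpace A] [IsTopologicalGroup A] [T2Space A]
    [CompactSpace A]
    (ac : G → A → A)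
    (hac : Continuous fun p : G × A => ac p.1 p.2)
    (hcomp : ∀ (s t : G) (x : A), ac (s * t) x = ac s (ac t x))
    (hdist : ∀ (s : G) (x y : A), ac s (x * y) = ac s x * ac s y) :
    T2Space (H1cts ac) ∧
    (CompactSpace (Z1cts ac) ↔ CompactSpace (H1cts ac)) ∧
    (CompactSpace G → T2Space G → EvenlyContinuousSet {f : G → A | Continuous f} →
      CompactSpace (H1cts ac)) := by
  have hπ := hasOrbitFibres_cocycleTwist hac hcomp hdist
  have hΦ := continuous_cocycleTwist hac hcomp hdist
  have hZH := hπ.compactSpace_iff isQuotientMap_quot_mk hΦ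
  refine ⟨hπ.t2Space isQuotientMap_quot_mk hΦ (isOpenMap_cocycleTwist hac hcomp hdist), hZH,
    fun _ _ hec => hZH.1 ?_⟩
  exact compactSpace_z1cts_of_evenlyContinuous
    (fun s => hac.comp (continuous_const.prodMk continuous_id)) hec

/-- For a compact `G`-group `A`: (i) `H¹_cts(G,A)_po` is Hausdorff;
(ii) `Z¹_cts(G,A)_po` is compact iff `H¹_cts(G,A)_po` is compact; in particular if `G`
is compact Hausdorff and `A` is evenly continuous with respect to `G`, then
`H¹_cts(G,A)_po` is compact. -/
theorem stmt_9
    {G : Type} [Group G] [TopologicalSpace G] [IsTopologicalGroup G]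
    {A : Type} [Group A] [TopologicalSpace A] [IsTopologicalGroup A] [T2Space A]
    [CompactSpace A]
    (ac : G → A → A)
    (hac : Continuous fun p : G × A => ac p.1 p.2)
    (hone : ∀ x : A, ac 1 x = x)
    (hcomp : ∀ (s t : G) (x : A), ac (s * t) x = ac s (ac t x))
    (hdist : ∀ (s : G) (x y : A), ac s (x * y) = ac s x * ac s y) :
    T2Space (H1cts ac) ∧
    (CompactSpace (Z1cts ac) ↔ CompactSpace (H1cts ac)) ∧
    (CompactSpace G → T2Space G → EvenlyContinuousSet {f : G → A | Continuous f} →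
      CompactSpace (H1cts ac)) :=
  stmt_9_general ac hac hcomp hdist
end

section
/- Let G be a topological group and A a compact G-group with a presentation A = lim_r A_r as the inverse limit of an inverse system {A_r, φ_{rt}} over a directed poset R of compact Hausdorff G-groups with continuous G-equivariant transition homomorphisms, with projections φ_r : A → A_r. If a, b ∈ Z¹_cts(G,A)_po are continuous cocycles such that for every r ∈ R the cocycles φ_r ∘ a and φ_r ∘ b are cohomologous in Z¹_cts(G,A_r)_po, then a and b are cohomologous in Z¹_cts(G,A)_po; that is, the map Θ : H¹_cts(G,A)_po → lim_r H¹_cts(G,A_r)_po, [a] ↦ ([φ_r ∘ a])_r, is injective. -/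
section Setup

variable {G : Type} [Group G] [TopologicalSpace G]
variable {R : Type} [PartialOrder R]
variable {Ar : R → Type} [∀ r, Group (Ar r)] [∀ r, TopologicalSpace (Ar r)]

/-- The inverse limit `A = {(x_r) ∈ ∏ A_r | φ_{rt}(x_r) = x_t}` of the system, with
the subspace topology of the product topology (its group operations and `G`-action
are coordinatewise). -/
abbrev InvLim (φ : ∀ ⦃r t : R⦄, t ≤ r → Ar r → Ar t) : Type :=
  {x : ∀ r, Ar r // ∀ (r t : R) (h : t ≤ r), φ h (x r) = x t}

/-- `Z¹_cts(G, lim A_r)_po`: continuous 1-cocycles of `G` in the inverse limit (the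
cocycle identity stated coordinatewise), with the point-open topology. -/
abbrev Z1Lim (acr : ∀ r, G → Ar r → Ar r) (φ : ∀ ⦃r t : R⦄, t ≤ r → Ar r → Ar t) :
    Type :=
  {a : G → InvLim φ // Continuous a ∧
    ∀ (s t : G) (r : R), (a (s * t)).val r = (a s).val r * acr r s ((a t).val r)}

end Setup

/-!
The elements of `A_r` conjugating `φ_r ∘ a` into `φ_r ∘ b` form a nonempty closed subset `S_r`
of the compact group `A_r`, and the transition maps send `S_r` into `S_t`. The sets of
threads of `∏ A_r` that are compatible below `u` and lie in `S_u` at `u` are closed, nonempty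
and directed downwards, so by compactness of `∏ A_r` they meet; a point in the intersection is
an element of `lim A_r` conjugating `a` into `b`.
-/

open Set

section InverseSystem

variable {R : Type*} [Preorder R] {X : R → Type*} (f : ∀ ⦃r t : R⦄, t ≤ r → X r → X t)

def threadsBelow (S : ∀ r, Set (X r)) (u : R) : Set (∀ r, X r) :=
  {x | x u ∈ S u ∧ ∀ t (h : t ≤ u), f h (x u) = x t}

variable {f}

theorem isClosed_threadsBelow [∀ r, TopologicalSpace (X r)] [∀ r, T2Space (X r)]
    (hf : ∀ r t (h : t ≤ r), Continuous (f h)) {S : ∀ r, Set (X r)} (hS : ∀ r, IsClosed (S r))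
    (u : R) :
    IsClosed (threadsBelow f S u) := by
  simp only [threadsBelow, ofPred_and, ofPred_forall]
  exact ((hS u).preimage (continuous_apply u)).inter <| isClosed_iInter fun t =>
    isClosed_iInter fun h => isClosed_eq ((hf u t h).comp (continuous_apply u)) (continuous_apply t)

variable
  (hcomp : ∀ r t u (h₁ : u ≤ t) (h₂ : t ≤ r) (x : X r), f h₁ (f h₂ x) = f (h₁.trans h₂) x)
  {S : ∀ r, Set (X r)} (hmaps : ∀ r t (h : t ≤ r), MapsTo (f h) (S r) (S t))
include hcomp hmaps

theorem threadsBelow_antitone : Antitone (threadsBelow f S) := by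
  intro u w huw x ⟨hxS, hx⟩
  refine ⟨hx u huw ▸ hmaps w u huw hxS, fun t htu => ?_⟩
  rw [← hx u huw, hcomp, hx]

theorem threadsBelow_nonempty (hne : ∀ r, (S r).Nonempty) (u : R) :
    (threadsBelow f S u).Nonempty := by
  classical
  obtain ⟨c, hc⟩ := hne u
  -- `f le_rfl` need not be the identity, so the thread takes the value `f le_rfl c` at `u`.
  refine ⟨fun t => if h : t ≤ u then f h c else (hne t).some, ?_, fun t htu => ?_⟩
  · simpa only [dif_pos le_rfl] using hmaps u u le_rfl hc
  · simp only [dif_pos le_rfl, dif_pos htu, hcomp]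

theorem exists_compatible_mem_of_isClosed [IsDirected R (· ≤ ·)] [∀ r, TopologicalSpace (X r)]
    [∀ r, CompactSpace (X r)] [∀ r, T2Space (X r)] (hf : ∀ r t (h : t ≤ r), Continuous (f h))
    (hS : ∀ r, IsClosed (S r)) (hne : ∀ r, (S r).Nonempty) :
    ∃ x : ∀ r, X r, (∀ r t (h : t ≤ r), f h (x r) = x t) ∧ ∀ r, x r ∈ S r := by
  cases isEmpty_or_nonempty R
  · exact ⟨isEmptyElim, isEmptyElim, isEmptyElim⟩
  have hclosed := isClosed_threadsBelow hf hS
  obtain ⟨x, hx⟩ := IsCompact.nonempty_iInter_of_directed_nonempty_isCompact_isClosed _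
    (threadsBelow_antitone hcomp hmaps).directed_ge (threadsBelow_nonempty hcomp hmaps hne)
    (fun u => (hclosed u).isCompact) hclosed
  rw [mem_iInter] at hx
  exact ⟨x, fun r t h => (hx r).2 t h, fun r => (hx r).1⟩

end InverseSystem

section Cohomologous

variable {G A B : Type*} [Group A] [Group B]

/-- The `x` with `β = α.x` for the right action of `A` on cocycles. -/
def cohomologyWitnesses (act : G → A → A) (α β : G → A) : Set A :=
  {x | ∀ s, β s = x⁻¹ * α s * act s x}

theorem isClosed_cohomologyWitnesses [TopologicalSpace A] [IsTopologicalGroup A] [T2Space A]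
    {act : G → A → A} (hact : ∀ s, Continuous (act s)) (α β : G → A) :
    IsClosed (cohomologyWitnesses act α β) := by
  simp only [cohomologyWitnesses, ofPred_forall]
  exact isClosed_iInter fun s => isClosed_eq continuous_const
    ((continuous_inv.mul continuous_const).mul (hact s))

theorem mapsTo_cohomologyWitnesses {actA : G → A → A} {actB : G → B → B} (ψ : A →* B)
    (hψ : ∀ s x, ψ (actA s x) = actB s (ψ x)) (α β : G → A) :
    MapsTo ψ (cohomologyWitnesses actA α β) (cohomologyWitnesses actB (ψ ∘ α) (ψ ∘ β)) :=
  fun x hx s => by simp only [Function.comp_apply, hx s, map_mul, map_inv, hψ]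

end Cohomologous

theorem stmt_11_general
    {G : Type} [Group G] [TopologicalSpace G]
    {R : Type} [PartialOrder R] [IsDirected R (· ≤ ·)]
    (Ar : R → Type) [∀ r, Group (Ar r)] [∀ r, TopologicalSpace (Ar r)]
    [∀ r, IsTopologicalGroup (Ar r)] [∀ r, T2Space (Ar r)] [∀ r, CompactSpace (Ar r)]
    (acr : ∀ r, G → Ar r → Ar r)
    (hacr : ∀ r, Continuous fun p : G × Ar r => acr r p.1 p.2)
    (φ : ∀ ⦃r t : R⦄, t ≤ r → Ar r → Ar t)
    (hφcont : ∀ (r t : R) (h : t ≤ r), Continuous (φ h))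
    (hφcomp : ∀ (r t u : R) (h1 : u ≤ t) (h2 : t ≤ r) (x : Ar r),
      φ h1 (φ h2 x) = φ (h1.trans h2) x)
    (hφmul : ∀ (r t : R) (h : t ≤ r) (x y : Ar r), φ h (x * y) = φ h x * φ h y)
    (hφequiv : ∀ (r t : R) (h : t ≤ r) (s : G) (x : Ar r),
      φ h (acr r s x) = acr t s (φ h x))
    (a b : Z1Lim acr φ)
    -- `φ_r ∘ a` and `φ_r ∘ b` are cohomologous in `Z¹_cts(G,A_r)_po` for every `r`
    (hcoh : ∀ r : R, ∃ x : Ar r, ∀ s : G,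
      (b.val s).val r = x⁻¹ * (a.val s).val r * acr r s x) :
    -- `a` and `b` are cohomologous in `Z¹_cts(G,A)_po`
    ∃ x : InvLim φ, ∀ (s : G) (r : R),
      (b.val s).val r = (x.val r)⁻¹ * (a.val s).val r * acr r s (x.val r) := by
  let S r := cohomologyWitnesses (acr r) (fun s => (a.val s).val r) (fun s => (b.val s).val r)
  have hproj : ∀ (c : Z1Lim acr φ) r t (h : t ≤ r),
      φ h ∘ (fun s => (c.val s).val r) = fun s => (c.val s).val t :=
    fun c r t h => funext fun s => (c.val s).prop r t h
  have hmaps : ∀ r t (h : t ≤ r), MapsTo (φ h) (S r) (S t) := fun r t h => by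
    simpa only [MonoidHom.mk'_apply, hproj] using
      mapsTo_cohomologyWitnesses (MonoidHom.mk' _ (hφmul r t h)) (hφequiv r t h)
        (fun s => (a.val s).val r) (fun s => (b.val s).val r)
  have hclosed : ∀ r, IsClosed (S r) := fun r =>
    isClosed_cohomologyWitnesses (fun s => (hacr r).comp (Continuous.prodMk_right s)) _ _
  obtain ⟨x, hxcompat, hxS⟩ :=
    exists_compatible_mem_of_isClosed hφcomp hmaps hφcont hclosed hcoh
  exact ⟨⟨x, hxcompat⟩, fun s r => hxS r s⟩

/-- With `A = lim_r A_r` a compact `G`-group presented as an inverse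
limit of compact Hausdorff `G`-groups, if two continuous cocycles `a, b` of `G` in
`A` are such that `φ_r ∘ a` and `φ_r ∘ b` are cohomologous in `Z¹_cts(G,A_r)_po` for
every `r`, then `a` and `b` are cohomologous in `Z¹_cts(G,A)_po`; that is, the map
`Θ : H¹_cts(G,A)_po → lim_r H¹_cts(G,A_r)_po` is injective. -/
theorem stmt_11
    {G : Type} [Group G] [TopologicalSpace G] [IsTopologicalGroup G]
    {R : Type} [PartialOrder R] [IsDirected R (· ≤ ·)]
    (Ar : R → Type) [∀ r, Group (Ar r)] [∀ r, TopologicalSpace (Ar r)]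
    [∀ r, IsTopologicalGroup (Ar r)] [∀ r, T2Space (Ar r)] [∀ r, CompactSpace (Ar r)]
    (acr : ∀ r, G → Ar r → Ar r)
    (hacr : ∀ r, Continuous fun p : G × Ar r => acr r p.1 p.2)
    (honer : ∀ r (x : Ar r), acr r 1 x = x)
    (hcompr : ∀ r (s t : G) (x : Ar r), acr r (s * t) x = acr r s (acr r t x))
    (hdistr : ∀ r (s : G) (x y : Ar r), acr r s (x * y) = acr r s x * acr r s y)
    (φ : ∀ ⦃r t : R⦄, t ≤ r → Ar r → Ar t)
    (hφcont : ∀ (r t : R) (h : t ≤ r), Continuous (φ h))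
    (hφid : ∀ r : R, φ (le_refl r) = id)
    (hφcomp : ∀ (r t u : R) (h1 : u ≤ t) (h2 : t ≤ r) (x : Ar r),
      φ h1 (φ h2 x) = φ (h1.trans h2) x)
    (hφmul : ∀ (r t : R) (h : t ≤ r) (x y : Ar r), φ h (x * y) = φ h x * φ h y)
    (hφequiv : ∀ (r t : R) (h : t ≤ r) (s : G) (x : Ar r),
      φ h (acr r s x) = acr t s (φ h x))
    -- `A` is a compact `G`-group
    (hAcomp : CompactSpace (InvLim φ))
    (a b : Z1Lim acr φ)
    -- `φ_r ∘ a` and `φ_r ∘ b` are cohomologous in `Z¹_cts(G,A_r)_po` for every `r`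
    (hcoh : ∀ r : R, ∃ x : Ar r, ∀ s : G,
      (b.val s).val r = x⁻¹ * (a.val s).val r * acr r s x) :
    -- `a` and `b` are cohomologous in `Z¹_cts(G,A)_po`
    ∃ x : InvLim φ, ∀ (s : G) (r : R),
      (b.val s).val r = (x.val r)⁻¹ * (a.val s).val r * acr r s (x.val r) :=
  stmt_11_general Ar acr hacr φ hφcont hφcomp hφmul hφequiv a b hcoh
end

section
/- Let G be a topological group and A a compact G-group with a presentation A = lim_r A_r as the inverse limit of an inverse system {A_r, φ_{rt}} over a directed poset R of compact Hausdorff G-groups with continuous G-equivariant transition homomorphisms, with projections φ_r : A → A_r. Suppose given continuous cocycles a_r ∈ Z¹_cts(G,A_r)_po for each r ∈ R such that φ_{rt} ∘ a_r is cohomologous to a_t in Z¹_cts(G,A_t)_po whenever r ≥ t. Then there exists a continuous cocycle a ∈ Z¹_cts(G,A)_po such that φ_r ∘ a is cohomologous to a_r for every r ∈ R; that is, the map Θ : H¹_cts(G,A)_po → lim_r H¹_cts(G,A_r)_po, [a] ↦ ([φ_r ∘ a])_r, is surjective. -/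
section Setup

variable {G : Type} [Group G] [TopologicalSpace G]
variable {R : Type} [PartialOrder R]
variable {Ar : R → Type} [∀ r, Group (Ar r)] [∀ r, TopologicalSpace (Ar r)]

/-- `Z¹_cts(G, A_r)_po` for an individual term of the system. -/
abbrev Z1r (acr : ∀ r, G → Ar r → Ar r) (r : R) : Type :=
  {b : G → Ar r // Continuous b ∧ ∀ s t : G, b (s * t) = b s * acr r s (b t)}

end Setup

/-!
Twisting `a_r` by `x_r ∈ A_r` gives the cohomologous cocycle `s ↦ x_r a_r(s) (s • x_r)⁻¹`;
it suffices to choose the `x_r` so that the twisted cocycles are compatible under the `φ_{rt}`,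
for then they assemble into a cocycle with values in the limit. For a single `r`, the
hypothesis provides `x_t` for all `t ≤ r` making the twisted cocycles at `t ≤ r` equal to
`φ_{rt} ∘ a_r`, hence compatible below `r`. Compatibility below `r` is a closed condition on
`∏ A_r` (cocycles carry the point-open topology), these conditions decrease in `r`, and
`∏ A_r` is compact, so some family satisfies all of them.
-/

section InverseSystem

variable {R : Type*} [Preorder R] {X Y : R → Type*} (F : ∀ r, X r → Y r)
  (ψ : ∀ ⦃r t : R⦄, t ≤ r → Y r → Y t)

def compatibleBelow (r : R) : Set (∀ r, X r) :=
  {x | ∀ (t u : R) (h : u ≤ t), t ≤ r → ψ h (F t (x t)) = F u (x u)}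

theorem compatibleBelow_antitone : Antitone (compatibleBelow F ψ) :=
  fun _ _ hrr' _ hx t u h ht => hx t u h (ht.trans hrr')

theorem isClosed_compatibleBelow [∀ r, TopologicalSpace (X r)] [∀ r, TopologicalSpace (Y r)]
    [∀ r, T2Space (Y r)] (hF : ∀ r, Continuous (F r))
    (hψ : ∀ (r t : R) (h : t ≤ r), Continuous (ψ h)) (r : R) :
    IsClosed (compatibleBelow F ψ r) := by
  simp only [compatibleBelow, Set.ofPred_forall]
  exact isClosed_iInter fun t => isClosed_iInter fun u => isClosed_iInter fun h =>
    isClosed_iInter fun _ => isClosed_eq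
      ((hψ t u h).comp ((hF t).comp (continuous_apply t))) ((hF u).comp (continuous_apply u))

theorem compatibleBelow_nonempty [∀ t, Nonempty (X t)]
    (hψcomp : ∀ (r t u : R) (h1 : u ≤ t) (h2 : t ≤ r) (y : Y r),
      ψ h1 (ψ h2 y) = ψ (h1.trans h2) y)
    (r : R) (y : Y r) (hy : ∀ (t : R) (h : t ≤ r), ∃ x : X t, F t x = ψ h y) :
    (compatibleBelow F ψ r).Nonempty := by
  classical
  choose x hx using hy
  refine ⟨fun t => if h : t ≤ r then x t h else Classical.arbitrary _, fun t u h ht => ?_⟩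
  simp only [dif_pos ht, dif_pos (h.trans ht), hx, hψcomp]

theorem exists_forall_compatible [IsDirected R (· ≤ ·)] [∀ r, TopologicalSpace (X r)]
    [∀ r, CompactSpace (X r)] [∀ r, TopologicalSpace (Y r)] [∀ r, T2Space (Y r)]
    (hF : ∀ r, Continuous (F r)) (hψ : ∀ (r t : R) (h : t ≤ r), Continuous (ψ h))
    (hψcomp : ∀ (r t u : R) (h1 : u ≤ t) (h2 : t ≤ r) (y : Y r),
      ψ h1 (ψ h2 y) = ψ (h1.trans h2) y)
    (hlift : ∀ r, ∃ y : Y r, ∀ (t : R) (h : t ≤ r), ∃ x : X t, F t x = ψ h y) :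
    ∃ x : ∀ r, X r, ∀ (r t : R) (h : t ≤ r), ψ h (F r (x r)) = F t (x t) := by
  rcases isEmpty_or_nonempty R with hR | hR
  · exact ⟨isEmptyElim, fun r => isEmptyElim r⟩
  have : ∀ t, Nonempty (X t) := fun t =>
    let ⟨_, hy⟩ := hlift t
    (hy t le_rfl).nonempty
  obtain ⟨x, hx⟩ := IsCompact.nonempty_iInter_of_directed_nonempty_isCompact_isClosed _
    (compatibleBelow_antitone F ψ).directed_ge
    (fun r => let ⟨y, hy⟩ := hlift r; compatibleBelow_nonempty F ψ hψcomp r y hy)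
    (fun r => (isClosed_compatibleBelow F ψ hF hψ r).isCompact)
    (isClosed_compatibleBelow F ψ hF hψ)
  exact ⟨x, fun r t h => Set.mem_iInter.mp hx r r t h le_rfl⟩

end InverseSystem

section Twist

variable {G A : Type*} [Group A] {act : G → A → A} {a : G → A}

def twist (act : G → A → A) (a : G → A) (x : A) : G → A :=
  fun s => x * a s * (act s x)⁻¹

theorem inv_mul_twist_mul (x : A) (s : G) : x⁻¹ * twist act a x s * act s x = a s := by
  simp only [twist]
  group

theorem twist_eq_of_cohomologous {c : G → A} {x : A} (h : ∀ s, a s = x⁻¹ * c s * act s x) :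
    twist act a x = c := by
  funext s
  simp only [twist, h]
  group

theorem twist_mul [Mul G] (hcomp : ∀ (s t : G) (x : A), act (s * t) x = act s (act t x))
    (hmul : ∀ (s : G) (x y : A), act s (x * y) = act s x * act s y)
    (ha : ∀ s t, a (s * t) = a s * act s (a t)) (x : A) (s t : G) :
    twist act a x (s * t) = twist act a x s * act s (twist act a x t) := by
  have hinv : act s (act t x)⁻¹ = (act s (act t x))⁻¹ :=
    map_inv (MonoidHom.mk' (act s) (hmul s)) _
  simp only [twist, ha, hcomp, hmul, hinv]
  group

variable [TopologicalSpace G] [TopologicalSpace A] [IsTopologicalGroup A]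

theorem Continuous.twist (ha : Continuous a) (hact : Continuous fun p : G × A => act p.1 p.2)
    (x : A) : Continuous (twist act a x) :=
  (continuous_const.mul ha).mul (hact.comp (continuous_id.prodMk continuous_const)).inv

theorem continuous_twist_apply (hact : Continuous fun p : G × A => act p.1 p.2) (s : G) :
    Continuous fun x => twist act a x s :=
  (continuous_id.mul continuous_const).mul (hact.comp (continuous_const.prodMk continuous_id)).inv

end Twist

theorem stmt_12_general
    {G : Type} [Group G] [TopologicalSpace G]
    {R : Type} [PartialOrder R] [IsDirected R (· ≤ ·)]
    (Ar : R → Type) [∀ r, Group (Ar r)] [∀ r, TopologicalSpace (Ar r)]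
    [∀ r, IsTopologicalGroup (Ar r)] [∀ r, T2Space (Ar r)] [∀ r, CompactSpace (Ar r)]
    (acr : ∀ r, G → Ar r → Ar r)
    (hacr : ∀ r, Continuous fun p : G × Ar r => acr r p.1 p.2)
    (hcompr : ∀ r (s t : G) (x : Ar r), acr r (s * t) x = acr r s (acr r t x))
    (hdistr : ∀ r (s : G) (x y : Ar r), acr r s (x * y) = acr r s x * acr r s y)
    (φ : ∀ ⦃r t : R⦄, t ≤ r → Ar r → Ar t)
    (hφcont : ∀ (r t : R) (h : t ≤ r), Continuous (φ h))
    (hφcomp : ∀ (r t u : R) (h1 : u ≤ t) (h2 : t ≤ r) (x : Ar r),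
      φ h1 (φ h2 x) = φ (h1.trans h2) x)
    -- a family of continuous cocycles, compatible up to coboundary
    (ar : ∀ r : R, Z1r acr r)
    (hcoh : ∀ (r t : R) (h : t ≤ r), ∃ x : Ar t, ∀ s : G,
      (ar t).val s = x⁻¹ * φ h ((ar r).val s) * acr t s x) :
    -- there is a continuous cocycle in the limit mapping to the class of each `a_r`
    ∃ a : Z1Lim acr φ, ∀ r : R, ∃ x : Ar r, ∀ s : G,
      (ar r).val s = x⁻¹ * (a.val s).val r * acr r s x := by
  obtain ⟨x, hx⟩ := exists_forall_compatible (Y := fun r => G → Ar r)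
    (fun r => twist (acr r) (ar r).val) (fun _ _ h b => φ h ∘ b)
    (fun r => continuous_pi fun s => continuous_twist_apply (hacr r) s)
    (fun r t h => continuous_pi fun s => (hφcont r t h).comp (continuous_apply s))
    (fun r t u h1 h2 b => funext fun s => hφcomp r t u h1 h2 (b s))
    (fun r => ⟨(ar r).val, fun t h => (hcoh r t h).imp fun _ => twist_eq_of_cohomologous⟩)
  refine ⟨⟨fun s => ⟨fun r => twist (acr r) (ar r).val (x r) s,
      fun r t h => congrFun (hx r t h) s⟩, ?_, ?_⟩,
    fun r => ⟨x r, fun s => (inv_mul_twist_mul (x r) s).symm⟩⟩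
  · exact (continuous_pi fun r => (ar r).prop.1.twist (hacr r) (x r)).subtype_mk _
  · exact fun s t r => twist_mul (hcompr r) (hdistr r) (ar r).prop.2 (x r) s t

/-- With `A = lim_r A_r` a compact `G`-group presented as an inverse
limit of compact Hausdorff `G`-groups, given continuous cocycles `a_r ∈
Z¹_cts(G,A_r)_po` such that `φ_{rt} ∘ a_r` is cohomologous to `a_t` whenever
`r ≥ t`, there exists a continuous cocycle `a ∈ Z¹_cts(G,A)_po` with `φ_r ∘ a`
cohomologous to `a_r` for every `r`; that is, the map
`Θ : H¹_cts(G,A)_po → lim_r H¹_cts(G,A_r)_po` is surjective. -/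
theorem stmt_12
    {G : Type} [Group G] [TopologicalSpace G] [IsTopologicalGroup G]
    {R : Type} [PartialOrder R] [IsDirected R (· ≤ ·)]
    (Ar : R → Type) [∀ r, Group (Ar r)] [∀ r, TopologicalSpace (Ar r)]
    [∀ r, IsTopologicalGroup (Ar r)] [∀ r, T2Space (Ar r)] [∀ r, CompactSpace (Ar r)]
    (acr : ∀ r, G → Ar r → Ar r)
    (hacr : ∀ r, Continuous fun p : G × Ar r => acr r p.1 p.2)
    (honer : ∀ r (x : Ar r), acr r 1 x = x)
    (hcompr : ∀ r (s t : G) (x : Ar r), acr r (s * t) x = acr r s (acr r t x))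
    (hdistr : ∀ r (s : G) (x y : Ar r), acr r s (x * y) = acr r s x * acr r s y)
    (φ : ∀ ⦃r t : R⦄, t ≤ r → Ar r → Ar t)
    (hφcont : ∀ (r t : R) (h : t ≤ r), Continuous (φ h))
    (hφid : ∀ r : R, φ (le_refl r) = id)
    (hφcomp : ∀ (r t u : R) (h1 : u ≤ t) (h2 : t ≤ r) (x : Ar r),
      φ h1 (φ h2 x) = φ (h1.trans h2) x)
    (hφmul : ∀ (r t : R) (h : t ≤ r) (x y : Ar r), φ h (x * y) = φ h x * φ h y)
    (hφequiv : ∀ (r t : R) (h : t ≤ r) (s : G) (x : Ar r),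
      φ h (acr r s x) = acr t s (φ h x))
    -- `A` is a compact `G`-group
    (hAcomp : CompactSpace (InvLim φ))
    -- a family of continuous cocycles, compatible up to coboundary
    (ar : ∀ r : R, Z1r acr r)
    (hcoh : ∀ (r t : R) (h : t ≤ r), ∃ x : Ar t, ∀ s : G,
      (ar t).val s = x⁻¹ * φ h ((ar r).val s) * acr t s x) :
    -- there is a continuous cocycle in the limit mapping to the class of each `a_r`
    ∃ a : Z1Lim acr φ, ∀ r : R, ∃ x : Ar r, ∀ s : G,
      (ar r).val s = x⁻¹ * (a.val s).val r * acr r s x :=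
  stmt_12_general Ar acr hacr hcompr hdistr φ hφcont hφcomp ar hcoh
end

section
/- Let G be a profinite group (compact Hausdorff totally disconnected topological group) and A a profinite G-module (a G-module that is compact, Hausdorff and totally disconnected). Then A admits a presentation A ≅ lim_r A_r as an inverse limit, over a directed poset R, of finite discrete G-modules A_r with G-equivariant transition homomorphisms. Moreover, fixing n ≥ 1 and such a presentation with projections φ_r : A → A_r, if each A_r is evenly continuous with respect to G^{n-1}, then the map Θ_n : H^n_cts(G,A)_po → lim_r H^n_cts(G,A_r)_po, [a] ↦ ([φ_r ∘ a])_r, is a continuous bijection, and it is a homeomorphism if A is evenly continuous with respect to G^n. -/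
/-- The differential `d_{n+1} : M(G^n, A) → M(G^{n+1}, A)` of continuous group
cohomology (in the paper's indexing, `dmap ac n` is `d_{n+1}`). -/
def dmap {G A : Type} [Group G] [AddCommGroup A] (ac : G → A → A) (n : ℕ)
    (f : (Fin n → G) → A) : (Fin (n + 1) → G) → A :=
  fun s =>
    ac (s 0) (f fun j => s j.succ)
      + (∑ i : Fin n, ((-1 : ℤ) ^ ((i : ℕ) + 1)) •
          f (fun j => if (j : ℕ) < (i : ℕ) then s j.castSucc
            else if (j : ℕ) = (i : ℕ) then s j.castSucc * s j.succ
            else s j.succ))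
      + ((-1 : ℤ) ^ (n + 1)) • f (fun j => s j.castSucc)

/-- `Z^{m+1}_cts(G,A)_po = ker d_{m+2}` with the point-open topology. -/
abbrev Zcts {G A : Type} [Group G] [TopologicalSpace G] [AddCommGroup A]
    [TopologicalSpace A] (ac : G → A → A) (m : ℕ) : Type :=
  {a : (Fin (m + 1) → G) → A // Continuous a ∧ ∀ s, dmap ac (m + 1) a s = 0}

/-- Two continuous `(m+1)`-cocycles are cohomologous if they differ by a coboundary
`d_{m+1} f` with `f : G^m → A` continuous. -/
def CohomologousN {G A : Type} [Group G] [TopologicalSpace G] [AddCommGroup A]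
    [TopologicalSpace A] (ac : G → A → A) (m : ℕ) (a b : Zcts ac m) : Prop :=
  ∃ f : (Fin m → G) → A, Continuous f ∧ ∀ s, b.val s = a.val s + dmap ac m f s

/-- The open `G`-stable subgroups of `A`: these index the canonical presentation of a
profinite `G`-module as an inverse limit of finite discrete `G`-modules. -/
abbrev StableOpen {G A : Type} [AddCommGroup A] [TopologicalSpace A]
    (ac : G → A → A) : Type :=
  {U : AddSubgroup A // IsOpen (U : Set A) ∧ ∀ (s : G) (x : A), x ∈ U → ac s x ∈ U}

/-!
Open `G`-stable subgroups form a basis of neighbourhoods of `0` in the profinite module `A`, and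
compactness of `A` makes `A → lim A/U` onto, so it is a homeomorphism.

For `Θ`, the key point is that even continuity of `A_r` with respect to `G^m` makes the continuous
maps `G^m → A_r` a closed, hence compact, subset of `A_r^{G^m}`, so the coboundaries of `A_r` are
compact. Injectivity and surjectivity of `Θ` then both come from the same compactness argument:
at each level `r` the witnesses (a cochain realising a coboundary, resp. a cocycle in the given
class) form a nonempty closed subset of a compact space, compatibly under the transition maps;
a compatible family of witnesses exists and glues through `A ≅ lim A_r` to a continuous cochain
of `A`. The coboundaries being closed makes each `H^{m+1}(G, A_r)` Hausdorff, and if `A` is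
evenly continuous with respect to `G^{m+1}` the cocycles of `A` form a compact space, so the
continuous bijection `Θ` is a homeomorphism.
-/

open Topology

section EvenContinuity

variable {B A : Type} [TopologicalSpace B] [TopologicalSpace A]

/- If `g` is a pointwise limit of continuous maps, one map `f` approximates `g` at `b` and at
`v` simultaneously; even continuity then transports `f b ≈ g b` to `f v ∈ U` for `v` near `b`. -/
theorem EvenlyContinuousSet.isClosed_setOf_continuous [RegularSpace A]
    (h : EvenlyContinuousSet {f : B → A | Continuous f}) :
    IsClosed {f : B → A | Continuous f} := by
  refine closure_subset_iff_isClosed.mp fun g hg => continuous_iff_continuousAt.mpr fun b => ?_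
  intro U' hU'
  obtain ⟨U, hU, hUc, hUU'⟩ := exists_mem_nhds_isClosed_subset hU'
  obtain ⟨V, hV, W, hW, hVW⟩ := h b (g b) U hU
  obtain ⟨W', hW'W, hW'o, hgW'⟩ := mem_nhds_iff.mp hW
  refine Filter.mem_map.mpr (Filter.mem_of_superset hV fun v hv => hUU' (hUc.closure_subset ?_))
  refine mem_closure_iff.mpr fun o ho hgo => ?_
  have hopen : IsOpen {f : B → A | f b ∈ W' ∧ f v ∈ o} :=
    ((continuous_apply b).isOpen_preimage _ hW'o).inter ((continuous_apply v).isOpen_preimage _ ho)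
  obtain ⟨f, ⟨hfb, hfv⟩, hf⟩ := mem_closure_iff.mp hg _ hopen ⟨hgW', hgo⟩
  exact ⟨f v, hfv, hVW f hf (hW'W hfb) v hv⟩

end EvenContinuity

section Cochains

variable {G A B : Type} [Group G] [AddCommGroup A] [AddCommGroup B] {ac : G → A → A}
  {ac' : G → B → B}

def dmapHom (ac : G → A → A) (hdist : ∀ (s : G) (x y : A), ac s (x + y) = ac s x + ac s y)
    (n : ℕ) : ((Fin n → G) → A) →+ ((Fin (n + 1) → G) → A) where
  toFun := dmap ac n
  map_zero' := by
    have h0 (t : G) : ac t 0 = 0 := (AddMonoidHom.mk' (ac t) (hdist t)).map_zero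
    funext s
    simp [dmap, h0]
  map_add' f g := by
    funext s
    simp only [dmap, Pi.add_apply, hdist, smul_add, Finset.sum_add_distrib]
    abel

theorem dmap_comp {φ : A → B} (hadd : ∀ x y, φ (x + y) = φ x + φ y)
    (hsmul : ∀ s x, φ (ac s x) = ac' s (φ x)) (n : ℕ) (f : (Fin n → G) → A) :
    dmap ac' n (φ ∘ f) = φ ∘ dmap ac n f := by
  funext s
  let φ' : A →+ B := AddMonoidHom.mk' φ hadd
  have hφ' (x : A) : φ x = φ' x := rfl
  simp only [dmap, Function.comp_apply, hφ', map_add, map_zsmul, map_sum]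
  simp only [← hφ', hsmul]

variable [TopologicalSpace A] [IsTopologicalAddGroup A]

theorem continuous_dmap (hac : ∀ s, Continuous (ac s)) (n : ℕ) : Continuous (dmap ac n) := by
  refine continuous_pi fun s => ?_
  unfold dmap
  fun_prop

variable [TopologicalSpace G]

theorem Continuous.dmap [ContinuousMul G] (hac : Continuous fun p : G × A => ac p.1 p.2) {n : ℕ}
    {f : (Fin n → G) → A} (hf : Continuous f) : Continuous (dmap ac n f) := by
  have hface (i : Fin n) : Continuous fun (s : Fin (n + 1) → G) (j : Fin n) =>
      if (j : ℕ) < i then s j.castSucc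
      else if (j : ℕ) = i then s j.castSucc * s j.succ else s j.succ :=
    continuous_pi fun j => by split_ifs <;> fun_prop
  unfold _root_.dmap
  refine (Continuous.add ?_ (continuous_finsetSum _ fun i _ =>
    (continuous_zsmul _).comp (hf.comp (hface i)))).add ?_ <;> fun_prop

variable (ac) in
def coboundaries (hdist : ∀ (s : G) (x y : A), ac s (x + y) = ac s x + ac s y) (m : ℕ) :
    AddSubgroup ((Fin (m + 1) → G) → A) :=
  (continuousAddSubgroup (Fin m → G) A).map (dmapHom ac hdist m)

theorem cohomologousN_iff (hdist : ∀ (s : G) (x y : A), ac s (x + y) = ac s x + ac s y) {m : ℕ}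
    {a b : Zcts ac m} : CohomologousN ac m a b ↔ b.val - a.val ∈ coboundaries ac hdist m := by
  rw [coboundaries, AddSubgroup.mem_map]
  constructor
  · rintro ⟨f, hf, hb⟩
    exact ⟨f, hf, funext fun s => by simp [dmapHom, hb s]⟩
  · rintro ⟨f, hf, hb⟩
    exact ⟨f, hf, fun s => (sub_eq_iff_eq_add'.mp (congrFun hb s).symm)⟩

theorem cohomologousN_equivalence (hdist : ∀ (s : G) (x y : A), ac s (x + y) = ac s x + ac s y)
    (m : ℕ) : Equivalence (CohomologousN ac m) where
  refl a := (cohomologousN_iff hdist).mpr (by simp)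
  symm h := (cohomologousN_iff hdist).mpr (by simpa using neg_mem ((cohomologousN_iff hdist).mp h))
  trans h h' := (cohomologousN_iff hdist).mpr (by
    simpa using add_mem ((cohomologousN_iff hdist).mp h') ((cohomologousN_iff hdist).mp h))

theorem continuous_of_mem_coboundaries [ContinuousMul G]
    (hac : Continuous fun p : G × A => ac p.1 p.2)
    {hdist : ∀ (s : G) (x y : A), ac s (x + y) = ac s x + ac s y} {m : ℕ}
    {g : (Fin (m + 1) → G) → A} (hg : g ∈ coboundaries ac hdist m) : Continuous g := by
  obtain ⟨f, hf, rfl⟩ := AddSubgroup.mem_map.mp hg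
  exact Continuous.dmap hac hf

theorem isCompact_coboundaries [CompactSpace A] [T2Space A]
    (hdist : ∀ (s : G) (x y : A), ac s (x + y) = ac s x + ac s y) (hac : ∀ s, Continuous (ac s))
    {m : ℕ} (hec : EvenlyContinuousSet {f : (Fin m → G) → A | Continuous f}) :
    IsCompact (coboundaries ac hdist m : Set ((Fin (m + 1) → G) → A)) := by
  rw [coboundaries, AddSubgroup.coe_map]
  exact hec.isClosed_setOf_continuous.isCompact.image (continuous_dmap hac m)

/- `H^{m+1}` injects continuously into the Hausdorff group `A^{G^{m+1}} / B^{m+1}`. -/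
theorem t2Space_quot_cohomologousN [CompactSpace A] [T2Space A]
    (hdist : ∀ (s : G) (x y : A), ac s (x + y) = ac s x + ac s y) (hac : ∀ s, Continuous (ac s))
    {m : ℕ} (hec : EvenlyContinuousSet {f : (Fin m → G) → A | Continuous f}) :
    T2Space (Quot (CohomologousN ac m)) := by
  have : IsClosed (coboundaries ac hdist m : Set ((Fin (m + 1) → G) → A)) :=
    (isCompact_coboundaries hdist hac hec).isClosed
  let toQuotient : Quot (CohomologousN ac m) → ((Fin (m + 1) → G) → A) ⧸ coboundaries ac hdist m :=
    Quot.lift (fun a => a.val) fun a b h =>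
      QuotientAddGroup.eq_iff_sub_mem.mpr (by simpa using neg_mem ((cohomologousN_iff hdist).mp h))
  refine T2Space.of_injective_continuous (f := toQuotient) ?_ ?_
  · rintro ⟨a⟩ ⟨b⟩ h
    refine Quot.sound ((cohomologousN_iff hdist).mpr ?_)
    simpa using neg_mem (QuotientAddGroup.eq_iff_sub_mem.mp h)
  · exact continuous_quot_lift _ (continuous_quotient_mk'.comp continuous_subtype_val)

theorem compactSpace_zcts [CompactSpace A] [T2Space A] (hac : ∀ s, Continuous (ac s)) {m : ℕ}
    (hec : EvenlyContinuousSet {f : (Fin (m + 1) → G) → A | Continuous f}) :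
    CompactSpace (Zcts ac m) := by
  have hcocycle : IsClosed {a : (Fin (m + 1) → G) → A | ∀ s, dmap ac (m + 1) a s = 0} := by
    simpa only [Set.ofPred_forall] using isClosed_iInter fun s =>
      isClosed_eq (f := fun a => dmap ac (m + 1) a s)
        ((continuous_apply s).comp (continuous_dmap hac _)) continuous_const
  exact isCompact_iff_compactSpace.mp (hec.isClosed_setOf_continuous.inter hcocycle).isCompact

end Cochains

section GModuleHom

variable {G A B : Type} [AddCommGroup A] [AddCommGroup B] {ac : G → A → A} {ac' : G → B → B}
  [TopologicalSpace A] [TopologicalSpace B]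

structure IsGModuleHom (ac : G → A → A) (ac' : G → B → B) (φ : A → B) : Prop where
  continuous : Continuous φ
  map_add : ∀ x y, φ (x + y) = φ x + φ y
  map_smul : ∀ s x, φ (ac s x) = ac' s (φ x)

namespace IsGModuleHom

variable {φ : A → B}

theorem map_zero (hφ : IsGModuleHom ac ac' φ) : φ 0 = 0 :=
  (AddMonoidHom.mk' φ hφ.map_add).map_zero

theorem map_sub (hφ : IsGModuleHom ac ac' φ) (x y : A) : φ (x - y) = φ x - φ y :=
  (AddMonoidHom.mk' φ hφ.map_add).map_sub x y

variable [Group G]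

theorem dmap_comp (hφ : IsGModuleHom ac ac' φ) (n : ℕ) (f : (Fin n → G) → A) :
    dmap ac' n (φ ∘ f) = φ ∘ dmap ac n f :=
  _root_.dmap_comp hφ.map_add hφ.map_smul n f

variable [TopologicalSpace G]

theorem map_mem_coboundaries [IsTopologicalAddGroup A] [IsTopologicalAddGroup B]
    (hφ : IsGModuleHom ac ac' φ) {hdist : ∀ (s : G) (x y : A), ac s (x + y) = ac s x + ac s y}
    {hdist' : ∀ (s : G) (x y : B), ac' s (x + y) = ac' s x + ac' s y} {m : ℕ}
    {g : (Fin (m + 1) → G) → A} (hg : g ∈ coboundaries ac hdist m) :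
    φ ∘ g ∈ coboundaries ac' hdist' m := by
  obtain ⟨f, hf, rfl⟩ := AddSubgroup.mem_map.mp hg
  refine AddSubgroup.mem_map.mpr ⟨φ ∘ f, hφ.continuous.comp hf, ?_⟩
  exact hφ.dmap_comp m f

end IsGModuleHom

variable [Group G] [TopologicalSpace G]

def Zcts.map {φ : A → B} (hφ : IsGModuleHom ac ac' φ) {m : ℕ} (a : Zcts ac m) : Zcts ac' m :=
  ⟨φ ∘ a.val, hφ.continuous.comp a.2.1, fun s => by
    rw [hφ.dmap_comp, Function.comp_apply, a.2.2 s]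
    exact hφ.map_zero⟩

theorem CohomologousN.map {φ : A → B} (hφ : IsGModuleHom ac ac' φ) {m : ℕ} {a b : Zcts ac m}
    (h : CohomologousN ac m a b) : CohomologousN ac' m (a.map hφ) (b.map hφ) := by
  obtain ⟨f, hf, hb⟩ := h
  refine ⟨φ ∘ f, hφ.continuous.comp hf, fun s => ?_⟩
  change φ (b.val s) = φ (a.val s) + dmap ac' m (φ ∘ f) s
  rw [hb s, hφ.map_add, hφ.dmap_comp, Function.comp_apply]

theorem continuous_zcts_map {φ : A → B} (hφ : IsGModuleHom ac ac' φ) {m : ℕ} :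
    Continuous (Zcts.map hφ : Zcts ac m → Zcts ac' m) :=
  Continuous.subtype_mk (continuous_pi fun s =>
    hφ.continuous.comp ((continuous_apply s).comp continuous_subtype_val)) _

def cohomologyMap {φ : A → B} (hφ : IsGModuleHom ac ac' φ) {m : ℕ} :
    Quot (CohomologousN ac m) → Quot (CohomologousN ac' m) :=
  Quot.map (Zcts.map hφ) fun _ _ => CohomologousN.map hφ

theorem continuous_cohomologyMap {φ : A → B} (hφ : IsGModuleHom ac ac' φ) {m : ℕ} :
    Continuous (cohomologyMap hφ : Quot (CohomologousN ac m) → _) :=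
  continuous_quot_lift _ (continuous_quot_mk.comp (continuous_zcts_map hφ))

end GModuleHom

section InverseLimit

variable {R : Type} [PartialOrder R] {P : R → Type} [∀ r, TopologicalSpace (P r)]
  {ψ : ∀ ⦃r t : R⦄, t ≤ r → P r → P t}

/- Cantor's intersection theorem for the compact sets of families compatible below `r`. -/
theorem exists_compatible_family_mem [IsDirected R (· ≤ ·)] [∀ r, CompactSpace (P r)]
    [∀ r, T2Space (P r)] (hψc : ∀ (r t : R) (h : t ≤ r), Continuous (ψ h))
    (hψid : ∀ (r : R) (x : P r), ψ le_rfl x = x)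
    (hψcomp : ∀ (r t u : R) (h₁ : u ≤ t) (h₂ : t ≤ r) (x : P r), ψ h₁ (ψ h₂ x) = ψ (h₁.trans h₂) x)
    {K : ∀ r, Set (P r)} (hKc : ∀ r, IsClosed (K r)) (hKne : ∀ r, (K r).Nonempty)
    (hψK : ∀ (r t : R) (h : t ≤ r), Set.MapsTo (ψ h) (K r) (K t)) :
    ∃ y : ∀ r, P r, (∀ r, y r ∈ K r) ∧ ∀ (r t : R) (h : t ≤ r), ψ h (y r) = y t := by
  rcases isEmpty_or_nonempty R with hR | hR
  · exact ⟨isEmptyElim, isEmptyElim, isEmptyElim⟩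
  classical
  let D (r : R) : Set (∀ r, P r) := {y | y r ∈ K r ∧ ∀ (t : R) (h : t ≤ r), ψ h (y r) = y t}
  have hDanti (r t : R) (h : t ≤ r) : D r ⊆ D t := fun y ⟨hyK, hy⟩ =>
    ⟨hy t h ▸ hψK r t h hyK, fun u hu => by rw [← hy t h, ← hy u (hu.trans h), hψcomp]⟩
  have hDc (r : R) : IsClosed (D r) := by
    have hcompat : IsClosed {y : ∀ r, P r | ∀ (t : R) (h : t ≤ r), ψ h (y r) = y t} := by
      simp only [Set.ofPred_forall]
      exact isClosed_iInter fun t => isClosed_iInter fun h =>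
        isClosed_eq ((hψc r t h).comp (continuous_apply r)) (continuous_apply t)
    exact ((hKc r).preimage (continuous_apply r)).inter hcompat
  have hDne (r : R) : (D r).Nonempty := by
    obtain ⟨x, hx⟩ := hKne r
    refine ⟨fun t => if h : t ≤ r then ψ h x else (hKne t).some, ?_, fun t h => ?_⟩
    · simpa [hψid] using hx
    · simp [dif_pos h, hψid]
  have hDdir : Directed (· ⊇ ·) D := fun r t =>
    let ⟨u, hru, htu⟩ := directed_of (· ≤ ·) r t
    ⟨u, hDanti u r hru, hDanti u t htu⟩
  obtain ⟨y, hy⟩ := IsCompact.nonempty_iInter_of_directed_nonempty_isCompact_isClosed D hDdir hDne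
    (fun r => (hDc r).isCompact) hDc
  rw [Set.mem_iInter] at hy
  exact ⟨y, fun r => (hy r).1, fun r t h => (hy r).2 t h⟩

end InverseLimit

section Presentation

variable {R : Type} [PartialOrder R] {Br : R → Type} [∀ r, TopologicalSpace (Br r)]
  {ψ : ∀ ⦃r t : R⦄, t ≤ r → Br r → Br t} {A : Type} [TopologicalSpace A] {φ : ∀ r, A → Br r}
  {hψφ : ∀ (r t : R) (h : t ≤ r) (x : A), ψ h (φ r x) = φ t x}

variable (ψ φ) in
abbrev IsInverseLimit (hψφ : ∀ (r t : R) (h : t ≤ r) (x : A), ψ h (φ r x) = φ t x) : Prop :=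
  IsHomeomorph (fun x : A => (⟨fun r => φ r x, fun r t h => hψφ r t h x⟩ :
    {y : ∀ r, Br r // ∀ (r t : R) (h : t ≤ r), ψ h (y r) = y t}))

theorem eq_of_forall_eq (hlim : IsInverseLimit ψ φ hψφ) {x y : A} (h : ∀ r, φ r x = φ r y) :
    x = y :=
  hlim.bijective.injective (Subtype.ext (funext h))

theorem continuous_of_forall_continuous_comp (hlim : IsInverseLimit ψ φ hψφ) {X : Type}
    [TopologicalSpace X] {f : X → A} (hf : ∀ r, Continuous (φ r ∘ f)) :
    Continuous f :=
  hlim.isInducing.continuous_iff.mpr (Continuous.subtype_mk (continuous_pi hf) _)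

theorem exists_forall_comp_mem [IsDirected R (· ≤ ·)] [∀ r, CompactSpace (Br r)]
    [∀ r, T2Space (Br r)] (hlim : IsInverseLimit ψ φ hψφ)
    (hψc : ∀ (r t : R) (h : t ≤ r), Continuous (ψ h))
    (hψid : ∀ (r : R) (x : Br r), ψ le_rfl x = x)
    (hψcomp : ∀ (r t u : R) (h₁ : u ≤ t) (h₂ : t ≤ r) (x : Br r), ψ h₁ (ψ h₂ x) = ψ (h₁.trans h₂) x)
    {X : Type} {K : ∀ r, Set (X → Br r)} (hKc : ∀ r, IsClosed (K r)) (hKne : ∀ r, (K r).Nonempty)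
    (hψK : ∀ (r t : R) (h : t ≤ r), ∀ g ∈ K r, ψ h ∘ g ∈ K t) :
    ∃ f : X → A, ∀ r, φ r ∘ f ∈ K r := by
  obtain ⟨g, hgK, hg⟩ := exists_compatible_family_mem (P := fun r => X → Br r)
    (ψ := fun r t h g => ψ h ∘ g)
    (fun r t h => continuous_pi fun x => (hψc r t h).comp (continuous_apply x))
    (fun r g => funext fun x => hψid r (g x))
    (fun r t u h₁ h₂ g => funext fun x => hψcomp r t u h₁ h₂ (g x)) hKc hKne hψK
  let e := hlim.homeomorph
  refine ⟨fun x => e.symm ⟨fun r => g r x, fun r t h => congrFun (hg r t h) x⟩, fun r => ?_⟩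
  convert hgK r using 1
  funext x
  exact congrArg (fun y => y.val r) (e.apply_symm_apply _)

end Presentation

section CohomologyOfLimit

variable {G : Type} [Group G] [TopologicalSpace G] {A : Type} [AddCommGroup A] [TopologicalSpace A]
  {ac : G → A → A} {R : Type} [PartialOrder R] {Br : R → Type} [∀ r, AddCommGroup (Br r)]
  [∀ r, TopologicalSpace (Br r)] {acr : ∀ r, G → Br r → Br r}
  {ψ : ∀ ⦃r t : R⦄, t ≤ r → Br r → Br t} {φ : ∀ r, A → Br r}
  {hψφ : ∀ (r t : R) (h : t ≤ r) (x : A), ψ h (φ r x) = φ t x} {m : ℕ}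

/- Compatibility is phrased through representatives: every representative of the `r`-component
is carried by `ψ` to a representative of the `t`-component. -/
variable (acr ψ m) in
abbrev CohomologyLimit : Type :=
  {h : ∀ r, Quot (CohomologousN (acr r) m) //
    ∀ (r t : R) (hle : t ≤ r) (b : Zcts (acr r) m), h r = Quot.mk _ b →
      ∃ c : Zcts (acr t) m, (∀ s, c.val s = ψ hle (b.val s)) ∧ h t = Quot.mk _ c}

/-- The map `Θ_{m+1}`. -/
def cohomologyToLimit (hφ : ∀ r, IsGModuleHom ac (acr r) (φ r))
    (hψ : ∀ (r t : R) (h : t ≤ r), IsGModuleHom (acr r) (acr t) (ψ h))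
    (hψφ : ∀ (r t : R) (h : t ≤ r) (x : A), ψ h (φ r x) = φ t x)
    (q : Quot (CohomologousN ac m)) : CohomologyLimit acr ψ m :=
  ⟨fun r => cohomologyMap (hφ r) q, fun r t hle b hb => ⟨b.map (hψ r t hle), fun _ => rfl, by
    induction q using Quot.ind with
    | mk a =>
      have hφt : a.map (hφ t) = (a.map (hφ r)).map (hψ r t hle) :=
        Subtype.ext (funext fun s => (hψφ r t hle (a.val s)).symm)
      change Quot.mk _ (a.map (hφ t)) = _
      rw [hφt]
      exact congrArg (cohomologyMap (hψ r t hle)) hb⟩⟩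

theorem continuous_cohomologyToLimit (hφ : ∀ r, IsGModuleHom ac (acr r) (φ r))
    (hψ : ∀ (r t : R) (h : t ≤ r), IsGModuleHom (acr r) (acr t) (ψ h))
    (hψφ : ∀ (r t : R) (h : t ≤ r) (x : A), ψ h (φ r x) = φ t x) :
    Continuous (cohomologyToLimit (m := m) hφ hψ hψφ) :=
  Continuous.subtype_mk (continuous_pi fun r => continuous_cohomologyMap (hφ r)) _

variable [IsDirected R (· ≤ ·)] [∀ r, IsTopologicalAddGroup (Br r)] [∀ r, CompactSpace (Br r)]
  [∀ r, T2Space (Br r)]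

theorem cohomologousN_of_forall_map (hlim : IsInverseLimit ψ φ hψφ)
    (hφ : ∀ r, IsGModuleHom ac (acr r) (φ r))
    (hψ : ∀ (r t : R) (h : t ≤ r), IsGModuleHom (acr r) (acr t) (ψ h))
    (hψid : ∀ (r : R) (x : Br r), ψ le_rfl x = x)
    (hψcomp : ∀ (r t u : R) (h₁ : u ≤ t) (h₂ : t ≤ r) (x : Br r), ψ h₁ (ψ h₂ x) = ψ (h₁.trans h₂) x)
    (hacr : ∀ r s, Continuous (acr r s))
    (hec : ∀ r, EvenlyContinuousSet {f : (Fin m → G) → Br r | Continuous f})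
    {a b : Zcts ac m} (h : ∀ r, CohomologousN (acr r) m (a.map (hφ r)) (b.map (hφ r))) :
    CohomologousN ac m a b := by
  let K (r : R) : Set ((Fin m → G) → Br r) :=
    {f | Continuous f ∧ ∀ s, φ r (b.val s) = φ r (a.val s) + dmap (acr r) m f s}
  have hKc (r : R) : IsClosed (K r) := by
    have hcob : IsClosed {f : (Fin m → G) → Br r |
        ∀ s, φ r (b.val s) = φ r (a.val s) + dmap (acr r) m f s} := by
      simp only [Set.ofPred_forall]
      exact isClosed_iInter fun s => isClosed_eq continuous_const
        (continuous_const.add ((continuous_apply s).comp (continuous_dmap (hacr r) m)))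
    exact (hec r).isClosed_setOf_continuous.inter hcob
  have hψK (r t : R) (hle : t ≤ r) : ∀ f ∈ K r, ψ hle ∘ f ∈ K t := by
    rintro f ⟨hfc, hf⟩
    refine ⟨(hψ r t hle).continuous.comp hfc, fun s => ?_⟩
    rw [← hψφ r t hle, hf s, (hψ r t hle).map_add, hψφ, (hψ r t hle).dmap_comp, Function.comp_apply]
  obtain ⟨f, hf⟩ := exists_forall_comp_mem hlim (fun r t h => (hψ r t h).continuous) hψid hψcomp
    hKc h hψK
  refine ⟨f, continuous_of_forall_continuous_comp hlim fun r => (hf r).1,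
    fun s => eq_of_forall_eq hlim fun r => ?_⟩
  rw [(hφ r).map_add, (hf r).2 s, (hφ r).dmap_comp, Function.comp_apply]

/- The components are pinned down modulo coboundaries, which form a compact set by even
continuity; the cocycle condition is closed in the point-open topology. -/
theorem exists_cocycle_of_compatible [ContinuousMul G] (hlim : IsInverseLimit ψ φ hψφ)
    (hφ : ∀ r, IsGModuleHom ac (acr r) (φ r))
    (hψ : ∀ (r t : R) (h : t ≤ r), IsGModuleHom (acr r) (acr t) (ψ h))
    (hψid : ∀ (r : R) (x : Br r), ψ le_rfl x = x)
    (hψcomp : ∀ (r t u : R) (h₁ : u ≤ t) (h₂ : t ≤ r) (x : Br r), ψ h₁ (ψ h₂ x) = ψ (h₁.trans h₂) x)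
    (hacr : ∀ r, Continuous fun p : G × Br r => acr r p.1 p.2)
    (hdistr : ∀ r (s : G) (x y : Br r), acr r s (x + y) = acr r s x + acr r s y)
    (hec : ∀ r, EvenlyContinuousSet {f : (Fin m → G) → Br r | Continuous f})
    (b : ∀ r, Zcts (acr r) m)
    (hb : ∀ (r t : R) (h : t ≤ r), CohomologousN (acr t) m (b t) ((b r).map (hψ r t h))) :
    ∃ a : Zcts ac m, ∀ r, CohomologousN (acr r) m (b r) (a.map (hφ r)) := by
  have hacr' (r : R) (s : G) : Continuous (acr r s) := (hacr r).comp (Continuous.prodMk_right s)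
  let K (r : R) : Set ((Fin (m + 1) → G) → Br r) :=
    {g | g - (b r).val ∈ coboundaries (acr r) (hdistr r) m ∧ dmap (acr r) (m + 1) g = 0}
  have hKc (r : R) : IsClosed (K r) :=
    ((isCompact_coboundaries (hdistr r) (hacr' r) (hec r)).isClosed.preimage
      (continuous_id.sub continuous_const)).inter
      (isClosed_eq (continuous_dmap (hacr' r) _) continuous_const)
  have hKne (r : R) : (K r).Nonempty := ⟨(b r).val, by simp, funext (b r).2.2⟩
  have hψK (r t : R) (hle : t ≤ r) : ∀ g ∈ K r, ψ hle ∘ g ∈ K t := by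
    rintro g ⟨hgb, hg⟩
    refine ⟨?_, by rw [(hψ r t hle).dmap_comp, hg]; exact funext fun _ => (hψ r t hle).map_zero⟩
    have hsplit : ψ hle ∘ g - (b t).val
        = ψ hle ∘ (g - (b r).val) + (((b r).map (hψ r t hle)).val - (b t).val) := by
      funext s
      change ψ hle (g s) - _ = ψ hle (g s - (b r).val s) + (ψ hle ((b r).val s) - _)
      rw [(hψ r t hle).map_sub]
      abel
    rw [hsplit]
    exact add_mem ((hψ r t hle).map_mem_coboundaries hgb)
      ((cohomologousN_iff (hdistr t)).mp (hb r t hle))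
  obtain ⟨a, ha⟩ := exists_forall_comp_mem hlim (fun r t h => (hψ r t h).continuous) hψid hψcomp
    hKc hKne hψK
  have hcont : Continuous a := continuous_of_forall_continuous_comp hlim fun r => by
    simpa using (continuous_of_mem_coboundaries (hacr r) (ha r).1).add (b r).2.1
  have hcocycle (s : Fin (m + 2) → G) : dmap ac (m + 1) a s = 0 :=
    eq_of_forall_eq hlim fun r => by
      rw [← Function.comp_apply (f := φ r), ← (hφ r).dmap_comp, (ha r).2, (hφ r).map_zero]
      rfl
  exact ⟨⟨a, hcont, hcocycle⟩, fun r => (cohomologousN_iff (hdistr r)).mpr (ha r).1⟩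

theorem cohomologyToLimit_injective (hlim : IsInverseLimit ψ φ hψφ)
    (hφ : ∀ r, IsGModuleHom ac (acr r) (φ r))
    (hψ : ∀ (r t : R) (h : t ≤ r), IsGModuleHom (acr r) (acr t) (ψ h))
    (hψid : ∀ (r : R) (x : Br r), ψ le_rfl x = x)
    (hψcomp : ∀ (r t u : R) (h₁ : u ≤ t) (h₂ : t ≤ r) (x : Br r), ψ h₁ (ψ h₂ x) = ψ (h₁.trans h₂) x)
    (hacr : ∀ r s, Continuous (acr r s))
    (hdistr : ∀ r (s : G) (x y : Br r), acr r s (x + y) = acr r s x + acr r s y)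
    (hec : ∀ r, EvenlyContinuousSet {f : (Fin m → G) → Br r | Continuous f}) :
    Function.Injective (cohomologyToLimit (m := m) hφ hψ hψφ) := by
  rintro ⟨a⟩ ⟨b⟩ hab
  refine Quot.sound (cohomologousN_of_forall_map hlim hφ hψ hψid hψcomp hacr hec fun r => ?_)
  exact (cohomologousN_equivalence (hdistr r) m).eqvGen_iff.mp
    (Quot.eq.mp (congrArg (fun h => h.val r) hab))

theorem cohomologyToLimit_surjective [ContinuousMul G] (hlim : IsInverseLimit ψ φ hψφ)
    (hφ : ∀ r, IsGModuleHom ac (acr r) (φ r))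
    (hψ : ∀ (r t : R) (h : t ≤ r), IsGModuleHom (acr r) (acr t) (ψ h))
    (hψid : ∀ (r : R) (x : Br r), ψ le_rfl x = x)
    (hψcomp : ∀ (r t u : R) (h₁ : u ≤ t) (h₂ : t ≤ r) (x : Br r), ψ h₁ (ψ h₂ x) = ψ (h₁.trans h₂) x)
    (hacr : ∀ r, Continuous fun p : G × Br r => acr r p.1 p.2)
    (hdistr : ∀ r (s : G) (x y : Br r), acr r s (x + y) = acr r s x + acr r s y)
    (hec : ∀ r, EvenlyContinuousSet {f : (Fin m → G) → Br r | Continuous f}) :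
    Function.Surjective (cohomologyToLimit (m := m) hφ hψ hψφ) := by
  rintro ⟨h, hh⟩
  choose b hb using fun r => Quot.exists_rep (h r)
  have hcompat (r t : R) (hle : t ≤ r) :
      CohomologousN (acr t) m (b t) ((b r).map (hψ r t hle)) := by
    obtain ⟨c, hc, hct⟩ := hh r t hle (b r) (hb r).symm
    obtain rfl : c = (b r).map (hψ r t hle) := Subtype.ext (funext hc)
    exact (cohomologousN_equivalence (hdistr t) m).eqvGen_iff.mp (Quot.eq.mp ((hb t).trans hct))
  obtain ⟨a, ha⟩ := exists_cocycle_of_compatible hlim hφ hψ hψid hψcomp hacr hdistr hec b hcompat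
  exact ⟨Quot.mk _ a, Subtype.ext (funext fun r => ((hb r).symm.trans (Quot.sound (ha r))).symm)⟩

end CohomologyOfLimit

section StableSubgroups

variable {G : Type} {A : Type} [AddCommGroup A] [TopologicalSpace A] {ac : G → A → A}

namespace StableOpen

def inf (U V : StableOpen ac) : StableOpen ac :=
  ⟨U.val ⊓ V.val, U.2.1.inter V.2.1, fun s x hx => ⟨U.2.2 s x hx.1, V.2.2 s x hx.2⟩⟩

instance [IsTopologicalAddGroup A] (U : StableOpen ac) : DiscreteTopology (A ⧸ U.val) :=
  QuotientAddGroup.discreteTopology U.2.1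

instance [IsTopologicalAddGroup A] [CompactSpace A] (U : StableOpen ac) : Finite (A ⧸ U.val) :=
  finite_of_compact_of_discrete

/- `{x | ∀ s, s • x ∈ V}` for an open subgroup `V ⊆ N`; it is open by the tube lemma over the
compact group `G`. -/
theorem exists_subset_of_mem_nhds [Monoid G] [TopologicalSpace G] [CompactSpace G]
    [IsTopologicalAddGroup A] [CompactSpace A] [T2Space A] [TotallyDisconnectedSpace A]
    (hac : Continuous fun p : G × A => ac p.1 p.2) (hone : ∀ x : A, ac 1 x = x)
    (hcomp : ∀ (s t : G) (x : A), ac (s * t) x = ac s (ac t x))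
    (hdist : ∀ (s : G) (x y : A), ac s (x + y) = ac s x + ac s y) {N : Set A} (hN : N ∈ 𝓝 0) :
    ∃ U : StableOpen ac, (U.val : Set A) ⊆ N := by
  have h0 (s : G) : ac s 0 = 0 := (AddMonoidHom.mk' (ac s) (hdist s)).map_zero
  have hneg (s : G) (x : A) : ac s (-x) = -ac s x := (AddMonoidHom.mk' (ac s) (hdist s)).map_neg x
  obtain ⟨O, hON, hOo, hO0⟩ := mem_nhds_iff.mp hN
  obtain ⟨W, hWc, hW0, hWO⟩ := compact_exists_isClopen_in_isOpen hOo hO0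
  obtain ⟨V, hVW⟩ := IsTopologicalAddGroup.exist_openAddSubgroup_sub_clopen_nhds_of_zero hWc hW0
  obtain ⟨u, v, -, hvo, hu, hv0, hv⟩ := generalized_tube_lemma isCompact_univ
    (isCompact_singleton (x := (0 : A))) (hac.isOpen_preimage _ V.isOpen) (by
      rintro ⟨s, x⟩ ⟨-, rfl⟩
      simp [h0])
  let U : AddSubgroup A :=
    { carrier := {x | ∀ s, ac s x ∈ V}
      zero_mem' := fun s => by simp [h0]
      add_mem' := fun hx hy s => by rw [hdist]; exact V.add_mem (hx s) (hy s)
      neg_mem' := fun hx s => by simpa [hneg] using V.neg_mem (hx s) }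
  have hvU : v ⊆ U := fun x hx s => hv (Set.mk_mem_prod (hu trivial) hx)
  refine ⟨⟨U, U.isOpen_of_mem_nhds (Filter.mem_of_superset (hvo.mem_nhds (hv0 rfl)) hvU),
    fun s x hx t => hcomp t s x ▸ hx (t * s)⟩, fun x hx => hON (hWO (hVW ?_))⟩
  simpa [hone] using hx 1

variable (hdist : ∀ (s : G) (x y : A), ac s (x + y) = ac s x + ac s y)

def action (U : StableOpen ac) (s : G) : A ⧸ U.val →+ A ⧸ U.val :=
  QuotientAddGroup.map U.val U.val (AddMonoidHom.mk' (ac s) (hdist s)) fun x hx => U.2.2 s x hx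

theorem action_mk (U : StableOpen ac) (s : G) (x : A) :
    U.action hdist s (QuotientAddGroup.mk x) = QuotientAddGroup.mk (ac s x) :=
  rfl

theorem continuous_action [TopologicalSpace G] [IsTopologicalAddGroup A]
    (hac : Continuous fun p : G × A => ac p.1 p.2) (U : StableOpen ac) :
    Continuous fun p : G × A ⧸ U.val => U.action hdist p.1 p.2 := by
  rw [← (IsOpenQuotientMap.id.prodMap QuotientAddGroup.isOpenQuotientMap_mk).continuous_comp_iff]
  exact continuous_quotient_mk'.comp hac

theorem action_one [One G] (hone : ∀ x : A, ac 1 x = x) (U : StableOpen ac) (x : A ⧸ U.val) :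
    U.action hdist 1 x = x :=
  QuotientAddGroup.induction_on x fun a => by rw [action_mk, hone]

theorem action_mul [Mul G] (hcomp : ∀ (s t : G) (x : A), ac (s * t) x = ac s (ac t x))
    (U : StableOpen ac) (s t : G) (x : A ⧸ U.val) :
    U.action hdist (s * t) x = U.action hdist s (U.action hdist t x) :=
  QuotientAddGroup.induction_on x fun a => by rw [action_mk, action_mk, action_mk, hcomp]

end StableOpen

variable (ac) in
abbrev StableOpenLimit : Type :=
  {h : ∀ U : StableOpen ac, A ⧸ U.val //
    ∀ U V : StableOpen ac, U.val ≤ V.val → ∀ x : A,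
      h U = QuotientAddGroup.mk x → h V = QuotientAddGroup.mk x}

def toStableOpenLimit (x : A) : StableOpenLimit ac :=
  ⟨fun _ => QuotientAddGroup.mk x, fun _ _ hUV _ hy =>
    QuotientAddGroup.eq.mpr (hUV (QuotientAddGroup.eq.mp hy))⟩

theorem continuous_toStableOpenLimit [IsTopologicalAddGroup A] :
    Continuous (toStableOpenLimit (ac := ac)) :=
  Continuous.subtype_mk (continuous_pi fun _ => continuous_quotient_mk') _

theorem toStableOpenLimit_injective [Monoid G] [TopologicalSpace G] [CompactSpace G]
    [IsTopologicalAddGroup A] [CompactSpace A] [T2Space A]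
    [TotallyDisconnectedSpace A] (hac : Continuous fun p : G × A => ac p.1 p.2)
    (hone : ∀ x : A, ac 1 x = x) (hcomp : ∀ (s t : G) (x : A), ac (s * t) x = ac s (ac t x))
    (hdist : ∀ (s : G) (x y : A), ac s (x + y) = ac s x + ac s y) :
    Function.Injective (toStableOpenLimit (ac := ac)) := by
  intro x y hxy
  by_contra hne
  obtain ⟨U, hU⟩ := StableOpen.exists_subset_of_mem_nhds hac hone hcomp hdist
    (isOpen_compl_singleton.mem_nhds (sub_ne_zero.mpr hne).symm)
  exact hU (QuotientAddGroup.eq_iff_sub_mem.mp (congrArg (fun h => h.val U) hxy)) rfl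

theorem toStableOpenLimit_surjective [IsTopologicalAddGroup A] [CompactSpace A] :
    Function.Surjective (toStableOpenLimit (ac := ac)) := by
  intro h
  let C (U : StableOpen ac) : Set A := QuotientAddGroup.mk ⁻¹' {h.val U}
  have hCc (U : StableOpen ac) : IsClosed (C U) :=
    isClosed_singleton.preimage QuotientAddGroup.continuous_mk
  have hCanti (U V : StableOpen ac) (hUV : U.val ≤ V.val) : C U ⊆ C V :=
    fun x hx => (h.2 U V hUV x hx.symm).symm
  have hCdir : Directed (· ⊇ ·) C := fun U V =>
    ⟨U.inf V, hCanti _ U inf_le_left, hCanti _ V inf_le_right⟩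
  have : Nonempty (StableOpen ac) := ⟨⟨⊤, isOpen_univ, fun _ _ _ => trivial⟩⟩
  obtain ⟨x, hx⟩ := IsCompact.nonempty_iInter_of_directed_nonempty_isCompact_isClosed C hCdir
    (fun U => QuotientAddGroup.mk_surjective (h.val U)) (fun U => (hCc U).isCompact) hCc
  exact ⟨x, Subtype.ext (funext (Set.mem_iInter.mp hx))⟩

theorem toStableOpenLimit_bijective [Monoid G] [TopologicalSpace G] [CompactSpace G]
    [IsTopologicalAddGroup A] [CompactSpace A] [T2Space A]
    [TotallyDisconnectedSpace A] (hac : Continuous fun p : G × A => ac p.1 p.2)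
    (hone : ∀ x : A, ac 1 x = x) (hcomp : ∀ (s t : G) (x : A), ac (s * t) x = ac s (ac t x))
    (hdist : ∀ (s : G) (x y : A), ac s (x + y) = ac s x + ac s y) :
    Function.Bijective (toStableOpenLimit (ac := ac)) :=
  ⟨toStableOpenLimit_injective hac hone hcomp hdist, toStableOpenLimit_surjective⟩

end StableSubgroups

theorem stmt_19_general
    {G : Type} [Group G] [TopologicalSpace G] [IsTopologicalGroup G]
    [CompactSpace G]
    {A : Type} [AddCommGroup A] [TopologicalSpace A] [IsTopologicalAddGroup A]
    [T2Space A] [CompactSpace A] [TotallyDisconnectedSpace A]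
    (ac : G → A → A)
    (hac : Continuous fun p : G × A => ac p.1 p.2)
    (hone : ∀ x : A, ac 1 x = x)
    (hcomp : ∀ (s t : G) (x : A), ac (s * t) x = ac s (ac t x))
    (hdist : ∀ (s : G) (x y : A), ac s (x + y) = ac s x + ac s y) :
    -- Part 1: `A` is an inverse limit of finite discrete `G`-modules: the open
    -- `G`-stable subgroups give such a presentation.
    ((∀ U : StableOpen ac, Finite (A ⧸ U.val) ∧ DiscreteTopology (A ⧸ U.val)) ∧
      -- the index set is directed (by reverse inclusion)
      (∀ U V : StableOpen ac, ∃ W : StableOpen ac, W.val ≤ U.val ∧ W.val ≤ V.val) ∧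
      -- the quotients carry the induced `G`-module structure and the natural map
      -- `A → lim_U A/U` is an isomorphism of topological groups commuting with the
      -- `G`-actions
      ∃ acq : ∀ U : StableOpen ac, G → A ⧸ U.val → A ⧸ U.val,
        (∀ (U : StableOpen ac) (s : G) (x : A),
          acq U s (QuotientAddGroup.mk x) = QuotientAddGroup.mk (ac s x)) ∧
        (∀ U : StableOpen ac,
          Continuous (fun p : G × (A ⧸ U.val) => acq U p.1 p.2)) ∧
        (∀ (U : StableOpen ac) (s : G) (x y : A ⧸ U.val),
          acq U s (x + y) = acq U s x + acq U s y) ∧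
        (∀ (U : StableOpen ac) (x : A ⧸ U.val), acq U 1 x = x) ∧
        (∀ (U : StableOpen ac) (s t : G) (x : A ⧸ U.val),
          acq U (s * t) x = acq U s (acq U t x)) ∧
        ∃ Φ : A → {h : ∀ U : StableOpen ac, A ⧸ U.val //
              ∀ U V : StableOpen ac, U.val ≤ V.val → ∀ x : A,
                h U = QuotientAddGroup.mk x → h V = QuotientAddGroup.mk x},
          (∀ (x : A) (U : StableOpen ac), (Φ x).val U = QuotientAddGroup.mk x) ∧
          Function.Bijective Φ ∧ IsHomeomorph Φ ∧
          (∀ (x y : A) (U : StableOpen ac),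
            (Φ (x + y)).val U = (Φ x).val U + (Φ y).val U) ∧
          (∀ (s : G) (x : A) (U : StableOpen ac),
            (Φ (ac s x)).val U = acq U s ((Φ x).val U))) ∧
    -- Part 2: for any presentation of `A` as an inverse limit of finite discrete
    -- `G`-modules and any `n = m+1 ≥ 1`, the map `Θ_n` is a continuous bijection,
    -- and a homeomorphism when `A` is evenly continuous with respect to `G^n`.
    (∀ (m : ℕ) (R : Type) (_ : PartialOrder R), IsDirected R (· ≤ ·) →
      ∀ (Br : R → Type) (_ : ∀ r, AddCommGroup (Br r))
        (_ : ∀ r, TopologicalSpace (Br r)) (_ : ∀ r, DiscreteTopology (Br r))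
        (_ : ∀ r, Finite (Br r))
        (acr : ∀ r, G → Br r → Br r),
        (∀ r, Continuous fun p : G × Br r => acr r p.1 p.2) →
        (∀ r (x : Br r), acr r 1 x = x) →
        (∀ r (s t : G) (x : Br r), acr r (s * t) x = acr r s (acr r t x)) →
        (∀ r (s : G) (x y : Br r), acr r s (x + y) = acr r s x + acr r s y) →
        ∀ ψ : ∀ ⦃r t : R⦄, t ≤ r → Br r → Br t,
        (∀ (r t : R) (h : t ≤ r), Continuous (ψ h)) →
        (∀ r : R, ψ (le_refl r) = id) →
        (∀ (r t u : R) (h1 : u ≤ t) (h2 : t ≤ r) (x : Br r),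
          ψ h1 (ψ h2 x) = ψ (h1.trans h2) x) →
        (∀ (r t : R) (h : t ≤ r) (x y : Br r), ψ h (x + y) = ψ h x + ψ h y) →
        (∀ (r t : R) (h : t ≤ r) (s : G) (x : Br r),
          ψ h (acr r s x) = acr t s (ψ h x)) →
        -- the projections `φ_r : A → A_r` of the presentation
        ∀ φp : ∀ r : R, A → Br r,
        (∀ r, Continuous (φp r)) →
        (∀ r (x y : A), φp r (x + y) = φp r x + φp r y) →
        (∀ r (s : G) (x : A), φp r (ac s x) = acr r s (φp r x)) →
        ∀ hψφ : ∀ (r t : R) (h : t ≤ r) (x : A), ψ h (φp r x) = φp t x,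
        -- `A ≅ lim_r A_r` via the projections
        IsHomeomorph (fun x : A =>
          (⟨fun r => φp r x, fun r t h => hψφ r t h x⟩ :
            {y : ∀ r, Br r // ∀ (r t : R) (h : t ≤ r), ψ h (y r) = y t})) →
        -- each `A_r` is evenly continuous with respect to `G^{n-1}`
        (∀ r, EvenlyContinuousSet {f : (Fin m → G) → Br r | Continuous f}) →
        ∃ Θ : Quot (CohomologousN ac m) →
            {h : ∀ r, Quot (CohomologousN (acr r) m) //
              ∀ (r t : R) (hle : t ≤ r) (b : Zcts (acr r) m),
                h r = Quot.mk _ b →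
                ∃ c : Zcts (acr t) m, (∀ s, c.val s = ψ hle (b.val s)) ∧
                  h t = Quot.mk _ c},
          -- `Θ_n` is given by `[a] ↦ ([φ_r ∘ a])_r`
          (∀ (a : Zcts ac m) (r : R), ∃ c : Zcts (acr r) m,
            (∀ s, c.val s = φp r (a.val s)) ∧
            (Θ (Quot.mk _ a)).val r = Quot.mk _ c) ∧
          Continuous Θ ∧
          Function.Bijective Θ ∧
          (EvenlyContinuousSet {f : (Fin (m + 1) → G) → A | Continuous f} →
            IsHomeomorph Θ)) := by
  refine ⟨⟨fun U => ⟨inferInstance, inferInstance⟩, fun U V => ⟨U.inf V, inf_le_left, inf_le_right⟩,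
    fun U s => U.action hdist s, fun U s x => rfl, StableOpen.continuous_action hdist hac,
    fun U s => map_add _, StableOpen.action_one hdist hone, StableOpen.action_mul hdist hcomp,
    toStableOpenLimit, fun _ _ => rfl, ?_, ?_, fun _ _ _ => rfl, fun _ _ _ => rfl⟩, ?_⟩
  · exact toStableOpenLimit_bijective hac hone hcomp hdist
  · exact isHomeomorph_iff_continuous_bijective.mpr
      ⟨continuous_toStableOpenLimit, toStableOpenLimit_bijective hac hone hcomp hdist⟩
  intro m R _ _ Br _ _ _ _ acr hacr _ _ hdistr ψ hψc hψid hψcomp hψadd hψac φ hφc hφadd hφac hψφ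
    hlim hec
  have hφ (r : R) : IsGModuleHom ac (acr r) (φ r) := ⟨hφc r, hφadd r, hφac r⟩
  have hψ (r t : R) (h : t ≤ r) : IsGModuleHom (acr r) (acr t) (ψ h) :=
    ⟨hψc r t h, hψadd r t h, hψac r t h⟩
  have hψid' (r : R) (x : Br r) : ψ le_rfl x = x := congrFun (hψid r) x
  have hacr' (r : R) (s : G) : Continuous (acr r s) := continuous_of_discreteTopology
  have hbij : Function.Bijective (cohomologyToLimit (m := m) hφ hψ hψφ) :=
    ⟨cohomologyToLimit_injective hlim hφ hψ hψid' hψcomp hacr' hdistr hec,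
      cohomologyToLimit_surjective hlim hφ hψ hψid' hψcomp hacr hdistr hec⟩
  refine ⟨cohomologyToLimit hφ hψ hψφ, fun a r => ⟨a.map (hφ r), fun _ => rfl, rfl⟩,
    continuous_cohomologyToLimit hφ hψ hψφ, hbij, fun hecA => ?_⟩
  have := compactSpace_zcts (ac := ac) (fun s => hac.comp (Continuous.prodMk_right s)) hecA
  have := fun r => t2Space_quot_cohomologousN (hdistr r) (hacr' r) (hec r)
  exact isHomeomorph_iff_continuous_bijective.mpr ⟨continuous_cohomologyToLimit hφ hψ hψφ, hbij⟩

/-- Let `G` be a profinite group and `A` a profinite `G`-module.  Then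
`A` admits a presentation as the inverse limit, over a directed poset, of finite
discrete `G`-modules (realized by the quotients `A/U` by open `G`-stable subgroups
`U`, directed by reverse inclusion).  Moreover, for any such presentation
`A ≅ lim_r A_r` and any `n = m+1 ≥ 1`, if each `A_r` is evenly continuous with
respect to `G^{n-1}`, then `Θ_n : H^n_cts(G,A)_po → lim_r H^n_cts(G,A_r)_po`,
`[a] ↦ ([φ_r ∘ a])_r`, is a continuous bijection; it is a homeomorphism if `A` is
evenly continuous with respect to `G^n`. -/
theorem stmt_19
    {G : Type} [Group G] [TopologicalSpace G] [IsTopologicalGroup G]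
    [CompactSpace G] [T2Space G] [TotallyDisconnectedSpace G]
    {A : Type} [AddCommGroup A] [TopologicalSpace A] [IsTopologicalAddGroup A]
    [T2Space A] [CompactSpace A] [TotallyDisconnectedSpace A]
    (ac : G → A → A)
    (hac : Continuous fun p : G × A => ac p.1 p.2)
    (hone : ∀ x : A, ac 1 x = x)
    (hcomp : ∀ (s t : G) (x : A), ac (s * t) x = ac s (ac t x))
    (hdist : ∀ (s : G) (x y : A), ac s (x + y) = ac s x + ac s y) :
    -- Part 1: `A` is an inverse limit of finite discrete `G`-modules: the open
    -- `G`-stable subgroups give such a presentation.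
    ((∀ U : StableOpen ac, Finite (A ⧸ U.val) ∧ DiscreteTopology (A ⧸ U.val)) ∧
      -- the index set is directed (by reverse inclusion)
      (∀ U V : StableOpen ac, ∃ W : StableOpen ac, W.val ≤ U.val ∧ W.val ≤ V.val) ∧
      -- the quotients carry the induced `G`-module structure and the natural map
      -- `A → lim_U A/U` is an isomorphism of topological groups commuting with the
      -- `G`-actions
      ∃ acq : ∀ U : StableOpen ac, G → A ⧸ U.val → A ⧸ U.val,
        (∀ (U : StableOpen ac) (s : G) (x : A),
          acq U s (QuotientAddGroup.mk x) = QuotientAddGroup.mk (ac s x)) ∧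
        (∀ U : StableOpen ac,
          Continuous (fun p : G × (A ⧸ U.val) => acq U p.1 p.2)) ∧
        (∀ (U : StableOpen ac) (s : G) (x y : A ⧸ U.val),
          acq U s (x + y) = acq U s x + acq U s y) ∧
        (∀ (U : StableOpen ac) (x : A ⧸ U.val), acq U 1 x = x) ∧
        (∀ (U : StableOpen ac) (s t : G) (x : A ⧸ U.val),
          acq U (s * t) x = acq U s (acq U t x)) ∧
        ∃ Φ : A → {h : ∀ U : StableOpen ac, A ⧸ U.val //
              ∀ U V : StableOpen ac, U.val ≤ V.val → ∀ x : A,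
                h U = QuotientAddGroup.mk x → h V = QuotientAddGroup.mk x},
          (∀ (x : A) (U : StableOpen ac), (Φ x).val U = QuotientAddGroup.mk x) ∧
          Function.Bijective Φ ∧ IsHomeomorph Φ ∧
          (∀ (x y : A) (U : StableOpen ac),
            (Φ (x + y)).val U = (Φ x).val U + (Φ y).val U) ∧
          (∀ (s : G) (x : A) (U : StableOpen ac),
            (Φ (ac s x)).val U = acq U s ((Φ x).val U))) ∧
    -- Part 2: for any presentation of `A` as an inverse limit of finite discrete
    -- `G`-modules and any `n = m+1 ≥ 1`, the map `Θ_n` is a continuous bijection,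
    -- and a homeomorphism when `A` is evenly continuous with respect to `G^n`.
    (∀ (m : ℕ) (R : Type) (_ : PartialOrder R), IsDirected R (· ≤ ·) →
      ∀ (Br : R → Type) (_ : ∀ r, AddCommGroup (Br r))
        (_ : ∀ r, TopologicalSpace (Br r)) (_ : ∀ r, DiscreteTopology (Br r))
        (_ : ∀ r, Finite (Br r))
        (acr : ∀ r, G → Br r → Br r),
        (∀ r, Continuous fun p : G × Br r => acr r p.1 p.2) →
        (∀ r (x : Br r), acr r 1 x = x) →
        (∀ r (s t : G) (x : Br r), acr r (s * t) x = acr r s (acr r t x)) →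
        (∀ r (s : G) (x y : Br r), acr r s (x + y) = acr r s x + acr r s y) →
        ∀ ψ : ∀ ⦃r t : R⦄, t ≤ r → Br r → Br t,
        (∀ (r t : R) (h : t ≤ r), Continuous (ψ h)) →
        (∀ r : R, ψ (le_refl r) = id) →
        (∀ (r t u : R) (h1 : u ≤ t) (h2 : t ≤ r) (x : Br r),
          ψ h1 (ψ h2 x) = ψ (h1.trans h2) x) →
        (∀ (r t : R) (h : t ≤ r) (x y : Br r), ψ h (x + y) = ψ h x + ψ h y) →
        (∀ (r t : R) (h : t ≤ r) (s : G) (x : Br r),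
          ψ h (acr r s x) = acr t s (ψ h x)) →
        -- the projections `φ_r : A → A_r` of the presentation
        ∀ φp : ∀ r : R, A → Br r,
        (∀ r, Continuous (φp r)) →
        (∀ r (x y : A), φp r (x + y) = φp r x + φp r y) →
        (∀ r (s : G) (x : A), φp r (ac s x) = acr r s (φp r x)) →
        ∀ hψφ : ∀ (r t : R) (h : t ≤ r) (x : A), ψ h (φp r x) = φp t x,
        -- `A ≅ lim_r A_r` via the projections
        IsHomeomorph (fun x : A =>
          (⟨fun r => φp r x, fun r t h => hψφ r t h x⟩ :
            {y : ∀ r, Br r // ∀ (r t : R) (h : t ≤ r), ψ h (y r) = y t})) →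
        -- each `A_r` is evenly continuous with respect to `G^{n-1}`
        (∀ r, EvenlyContinuousSet {f : (Fin m → G) → Br r | Continuous f}) →
        ∃ Θ : Quot (CohomologousN ac m) →
            {h : ∀ r, Quot (CohomologousN (acr r) m) //
              ∀ (r t : R) (hle : t ≤ r) (b : Zcts (acr r) m),
                h r = Quot.mk _ b →
                ∃ c : Zcts (acr t) m, (∀ s, c.val s = ψ hle (b.val s)) ∧
                  h t = Quot.mk _ c},
          -- `Θ_n` is given by `[a] ↦ ([φ_r ∘ a])_r`
          (∀ (a : Zcts ac m) (r : R), ∃ c : Zcts (acr r) m,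
            (∀ s, c.val s = φp r (a.val s)) ∧
            (Θ (Quot.mk _ a)).val r = Quot.mk _ c) ∧
          Continuous Θ ∧
          Function.Bijective Θ ∧
          (EvenlyContinuousSet {f : (Fin (m + 1) → G) → A | Continuous f} →
            IsHomeomorph Θ)) :=
  stmt_19_general ac hac hone hcomp hdist
end
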